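/- arXiv:hep-th/9701111 — 7 statements merged into one kernel-verified Lean document; each statement's English description precedes it below -/
import Mathlib

section
/- Let W ∈ R satisfy p_α W p_α = 0 for every α, and set A := ∑_{α ≠ β} (λ_α − λ_β)⁻¹ p_α W p_β. Then [H_0, [A, p_γ]] = [W, p_γ] for every γ = 1,…,r. (Equivalently, A' = iA solves the equation [W, p_γ] + i[H_0, [A', p_γ]] = 0 arising at each order of ħ in the proof of Theorem 1.) -/
/-- In an associative unital `ℂ`-algebra with a complete orthogonal
family of idempotents `p_α`, central elements `λ_α` with `λ_α - λ_β` invertible for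
`α ≠ β`, and `H_0 = ∑_α λ_α p_α`: if `p_α W p_α = 0` for all `α` and
`A = ∑_{α ≠ β} (λ_α - λ_β)⁻¹ p_α W p_β`, then `[H_0, [A, p_γ]] = [W, p_γ]` for all `γ`. -/
theorem solution_of_homological_equation
    (R : Type*) [Ring R] [Algebra ℂ R] (r : ℕ)
    (p : Fin r → R) (lam : Fin r → R)
    (horth : ∀ α β, α ≠ β → p α * p β = 0)
    (hidem : ∀ α, p α * p α = p α)
    (hsum : ∑ α, p α = 1)
    (hcentral : ∀ α (x : R), lam α * x = x * lam α)
    (hinv : ∀ α β, α ≠ β → IsUnit (lam α - lam β))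
    (H₀ : R) (hH₀ : H₀ = ∑ α, lam α * p α)
    (W : R) (hW : ∀ α, p α * W * p α = 0)
    (A : R)
    (hA : A = ∑ α, ∑ β, if α ≠ β then
        Ring.inverse (lam α - lam β) * (p α * W * p β) else 0) :
    ∀ γ, H₀ * (A * p γ - p γ * A) - (A * p γ - p γ * A) * H₀
        = W * p γ - p γ * W := by
  intro γ
  -- the inverses are central
  have hcinv : ∀ α β, α ≠ β → ∀ x : R,
      Ring.inverse (lam α - lam β) * x = x * Ring.inverse (lam α - lam β) := by
    intro α β h x
    obtain ⟨u, hu⟩ := hinv α β h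
    have hcomm : Commute x (u : R) := by
      rw [hu]
      show x * _ = _ * x
      rw [mul_sub, sub_mul, hcentral α x, hcentral β x]
    rw [← hu, Ring.inverse_unit]
    exact (hcomm.units_inv_right).symm.eq
  have hHp : ∀ α, H₀ * p α = lam α * p α := by
    intro α
    rw [hH₀, Finset.sum_mul, Finset.sum_eq_single α]
    · rw [mul_assoc, hidem]
    · intro β _ hβ
      rw [mul_assoc, horth β α hβ, mul_zero]
    · simp
  have hpH : ∀ α, p α * H₀ = lam α * p α := by
    intro α
    rw [hH₀, Finset.mul_sum, Finset.sum_eq_single α]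
    · rw [← mul_assoc, ← hcentral α (p α), mul_assoc, hidem]
    · intro β _ hβ
      rw [← mul_assoc, ← hcentral β (p α), mul_assoc, horth α β (Ne.symm hβ), mul_zero]
    · simp
  -- A * p γ
  have hApγ : A * p γ = ∑ α, if α ≠ γ then
      Ring.inverse (lam α - lam γ) * (p α * W * p γ) else 0 := by
    rw [hA, Finset.sum_mul]
    refine Finset.sum_congr rfl fun α _ => ?_
    rw [Finset.sum_mul, Finset.sum_eq_single γ]
    · split_ifs with h
      · rw [mul_assoc, mul_assoc, hidem]
      · simp
    · intro β _ hβ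
      split_ifs with h
      · rw [mul_assoc, mul_assoc, horth β γ hβ, mul_zero, mul_zero]
      · simp
    · simp
  -- p γ * A
  have hpγA : p γ * A = ∑ β, if γ ≠ β then
      Ring.inverse (lam γ - lam β) * (p γ * W * p β) else 0 := by
    rw [hA, Finset.mul_sum, Finset.sum_eq_single γ]
    · rw [Finset.mul_sum]
      refine Finset.sum_congr rfl fun β _ => ?_
      split_ifs with h
      · rw [← mul_assoc, ← hcinv γ β h (p γ), mul_assoc,
          ← mul_assoc (p γ) (p γ * W), ← mul_assoc (p γ) (p γ), hidem]
      · simp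
    · intro α _ hα
      rw [Finset.mul_sum]
      refine Finset.sum_eq_zero fun β _ => ?_
      split_ifs with h
      · rw [← mul_assoc, ← hcinv α β h (p γ), mul_assoc,
          ← mul_assoc (p γ) (p α * W), ← mul_assoc (p γ) (p α),
          horth γ α (Ne.symm hα), zero_mul, zero_mul, mul_zero]
      · simp
    · simp
  -- first commutator piece
  have key1 : H₀ * (A * p γ) - (A * p γ) * H₀ = W * p γ := by
    rw [hApγ]
    simp only [Finset.mul_sum, Finset.sum_mul]
    rw [← Finset.sum_sub_distrib]
    have : ∀ α ∈ Finset.univ, (H₀ * (if α ≠ γ then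
        Ring.inverse (lam α - lam γ) * (p α * W * p γ) else 0)
        - (if α ≠ γ then Ring.inverse (lam α - lam γ) * (p α * W * p γ) else 0) * H₀)
        = p α * W * p γ := by
      intro α _
      split_ifs with h
      · have h1 : H₀ * (Ring.inverse (lam α - lam γ) * (p α * W * p γ))
            = Ring.inverse (lam α - lam γ) * (lam α * (p α * W * p γ)) := by
          rw [← mul_assoc, ← hcinv α γ h H₀, mul_assoc]
          congr 1
          rw [← mul_assoc, ← mul_assoc, hHp α]
          noncomm_ring
        have h2 : (Ring.inverse (lam α - lam γ) * (p α * W * p γ)) * H₀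
            = Ring.inverse (lam α - lam γ) * (lam γ * (p α * W * p γ)) := by
          rw [mul_assoc]
          congr 1
          rw [mul_assoc, hpH γ, ← mul_assoc, ← hcentral γ (p α * W), mul_assoc]
        rw [h1, h2, ← mul_sub, ← sub_mul, ← mul_assoc,
          Ring.inverse_mul_cancel _ (hinv α γ h), one_mul]
      · push_neg at h
        subst h
        rw [hW α]
        simp
    rw [Finset.sum_congr rfl this, ← Finset.sum_mul, ← Finset.sum_mul, hsum, one_mul]
  -- second commutator piece
  have key2 : H₀ * (p γ * A) - (p γ * A) * H₀ = p γ * W := by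
    rw [hpγA]
    simp only [Finset.mul_sum, Finset.sum_mul]
    rw [← Finset.sum_sub_distrib]
    have : ∀ β ∈ Finset.univ, (H₀ * (if γ ≠ β then
        Ring.inverse (lam γ - lam β) * (p γ * W * p β) else 0)
        - (if γ ≠ β then Ring.inverse (lam γ - lam β) * (p γ * W * p β) else 0) * H₀)
        = p γ * W * p β := by
      intro β _
      split_ifs with h
      · have h1 : H₀ * (Ring.inverse (lam γ - lam β) * (p γ * W * p β))
            = Ring.inverse (lam γ - lam β) * (lam γ * (p γ * W * p β)) := by
          rw [← mul_assoc, ← hcinv γ β h H₀, mul_assoc]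
          congr 1
          rw [← mul_assoc, ← mul_assoc, hHp γ]
          noncomm_ring
        have h2 : (Ring.inverse (lam γ - lam β) * (p γ * W * p β)) * H₀
            = Ring.inverse (lam γ - lam β) * (lam β * (p γ * W * p β)) := by
          rw [mul_assoc]
          congr 1
          rw [mul_assoc, hpH β, ← mul_assoc, ← hcentral β (p γ * W), mul_assoc]
        rw [h1, h2, ← mul_sub, ← sub_mul, ← mul_assoc,
          Ring.inverse_mul_cancel _ (hinv γ β h), one_mul]
      · push_neg at h
        subst h
        rw [hW γ]
        simp
    rw [Finset.sum_congr rfl this, ← Finset.mul_sum, hsum, mul_one]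
  have hsplit : H₀ * (A * p γ - p γ * A) - (A * p γ - p γ * A) * H₀
      = (H₀ * (A * p γ) - (A * p γ) * H₀) - (H₀ * (p γ * A) - (p γ * A) * H₀) := by
    noncomm_ring
  rw [hsplit, key1, key2]
end

section
/- For every α and all coordinate directions i, l, pointwise on U: π_α (γ_i (∇_l H_0) − (∇_i H_0) γ_l) π_α = 2 ∑_β λ_β π_α (∇_i π_β)(∇_l π_α). (This is the first correction term at order ħ in the block-diagonalized Hamiltonian symbol.) -/
open Matrix

attribute [local instance]
  Matrix.linftyOpNormedAddCommGroup Matrix.linftyOpNormedSpace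

/-- Partial derivative `∂_i X` of a matrix-valued function on
`EuclideanSpace ℝ (Fin m)` in the `i`-th coordinate direction. -/
noncomputable def mpd {m n : ℕ} (i : Fin m)
    (X : EuclideanSpace ℝ (Fin m) → Matrix (Fin n) (Fin n) ℂ)
    (x : EuclideanSpace ℝ (Fin m)) : Matrix (Fin n) (Fin n) ℂ :=
  fderiv ℝ X x (EuclideanSpace.single i 1)

/-- Covariant derivative `∇_i X = ∂_i X + [Γ_i, X]` induced on
endomorphism-valued functions by the connection with coefficients `Γ`. -/
noncomputable def cd {m n : ℕ}
    (Γ : Fin m → EuclideanSpace ℝ (Fin m) → Matrix (Fin n) (Fin n) ℂ)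
    (i : Fin m)
    (X : EuclideanSpace ℝ (Fin m) → Matrix (Fin n) (Fin n) ℂ)
    (x : EuclideanSpace ℝ (Fin m)) : Matrix (Fin n) (Fin n) ℂ :=
  mpd i X x + (Γ i x * X x - X x * Γ i x)

/-- The Berry connection one-form coefficients `γ_i = ∑_β π_β (∇_i π_β)`. -/
noncomputable def berryGamma {m n r : ℕ}
    (Γ : Fin m → EuclideanSpace ℝ (Fin m) → Matrix (Fin n) (Fin n) ℂ)
    (π : Fin r → EuclideanSpace ℝ (Fin m) → Matrix (Fin n) (Fin n) ℂ)
    (i : Fin m) (x : EuclideanSpace ℝ (Fin m)) : Matrix (Fin n) (Fin n) ℂ :=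
  ∑ β, π β x * cd Γ i (π β) x


/-- Pure algebra core of the computation. -/
lemma key_algebra {R : Type*} [Ring R] [Module ℝ R]
    [SMulCommClass ℝ R R] [IsScalarTower ℝ R R] {r : ℕ} (α : Fin r)
    (P Di Dl : Fin r → R) (ci cl lamx : Fin r → ℝ)
    (hI : ∀ β, P β * P β = P β)
    (hO : ∀ β γ, β ≠ γ → P β * P γ = 0)
    (hS : ∑ β, P β = 1)
    (hAi : ∀ β γ, β ≠ γ → Di β * P γ + P β * Di γ = 0)
    (hAl : ∀ β γ, β ≠ γ → Dl β * P γ + P β * Dl γ = 0)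
    (hBi : ∀ β, Di β * P β + P β * Di β = Di β)
    (hBl : ∀ β, Dl β * P β + P β * Dl β = Dl β) :
    P α * ((∑ β, P β * Di β) * (∑ β, (cl β • P β + lamx β • Dl β))
        - (∑ β, (ci β • P β + lamx β • Di β)) * (∑ β, P β * Dl β)) * P α
      = (2 : ℝ) • ∑ β, lamx β • (P α * Di β * Dl α) := by
  -- basic consequences
  have h1i : P α * Di α * P α = 0 := by
    have h := congrArg (fun X => P α * X * P α) (hBi α)
    simp only [mul_add, add_mul, ← mul_assoc] at h
    rw [hI α, mul_assoc (P α * Di α), hI α] at h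
    -- h : P α * Di α * P α + P α * Di α * P α = P α * Di α * P α
    have := add_left_cancel (a := P α * Di α * P α)
      (b := P α * Di α * P α) (c := 0) (by rw [add_zero]; exact h)
    exact this
  have h1l : P α * Dl α * P α = 0 := by
    have h := congrArg (fun X => P α * X * P α) (hBl α)
    simp only [mul_add, add_mul, ← mul_assoc] at h
    rw [hI α, mul_assoc (P α * Dl α), hI α] at h
    exact add_left_cancel (a := P α * Dl α * P α) (by rw [add_zero]; exact h)
  -- P α * Di β * P α = 0 for all β
  have h2 : ∀ β, P α * Di β * P α = 0 := by
    intro β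
    by_cases hβ : β = α
    · subst hβ; exact h1i
    · have h := hAi α β (Ne.symm hβ)
      have : P α * Di β = -(Di α * P β) :=
        eq_neg_of_add_eq_zero_right h
      rw [this]
      simp [mul_assoc, hO β α hβ]
  -- collapse of γ_i on the left
  have E1 : P α * (∑ β, P β * Di β) = P α * Di α := by
    rw [Finset.mul_sum]
    rw [Finset.sum_eq_single α]
    · rw [← mul_assoc, hI α]
    · intro β _ hβ
      rw [← mul_assoc, hO α β (Ne.symm hβ), zero_mul]
    · simp
  -- collapse of γ_l on the right
  have E2 : (∑ β, P β * Dl β) * P α = P α * Dl α - Dl α := by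
    rw [Finset.sum_mul]
    have : ∀ β : Fin r, P β * Dl β * P α
        = -(P β * Dl α) + (if β = α then P α * Dl α else 0) := by
      intro β
      by_cases hβ : β = α
      · simp only [hβ, if_pos rfl]
        have hd : Dl α * P α = Dl α - P α * Dl α :=
          eq_sub_of_add_eq (hBl α)
        rw [mul_assoc, hd]
        rw [mul_sub, ← mul_assoc, hI α]
        simp
      · simp only [if_neg hβ, add_zero]
        have h := hAl β α hβ
        have : Dl β * P α = -(P β * Dl α) :=
          eq_neg_of_add_eq_zero_left h
        rw [mul_assoc, this, mul_neg, ← mul_assoc, hI β]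
    rw [Finset.sum_congr rfl (fun β _ => this β), Finset.sum_add_distrib]
    rw [Finset.sum_ite_eq' Finset.univ α (fun _ => P α * Dl α)]
    simp only [Finset.mem_univ, if_pos]
    rw [Finset.sum_neg_distrib, ← Finset.sum_mul, hS, one_mul]
    abel
  -- pointwise claims
  have F1 : ∀ β, P α * Di α * P β * P α = 0 := by
    intro β
    by_cases hβ : β = α
    · simp only [hβ]
      rw [mul_assoc (P α * Di α), hI α, h1i]
    · rw [mul_assoc (P α * Di α), hO β α hβ, mul_zero]
  have F2 : ∀ β, P α * Di α * Dl β * P α = P α * Di β * Dl α := by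
    intro β
    by_cases hβ : β = α
    · simp only [hβ]
      have hd : Dl α * P α = Dl α - P α * Dl α := eq_sub_of_add_eq (hBl α)
      rw [mul_assoc (P α * Di α), hd, mul_sub, ← mul_assoc, h1i, zero_mul, sub_zero]
    · have hl : Dl β * P α = -(P β * Dl α) := eq_neg_of_add_eq_zero_left (hAl β α hβ)
      have hi : Di α * P β = -(P α * Di β) :=
        eq_neg_of_add_eq_zero_left (hAi α β (Ne.symm hβ))
      calc P α * Di α * Dl β * P α
          = (P α * Di α) * (Dl β * P α) := by rw [mul_assoc]
        _ = (P α * Di α) * (-(P β * Dl α)) := by rw [hl]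
        _ = -((P α * (Di α * P β)) * Dl α) := by noncomm_ring
        _ = -((P α * -(P α * Di β)) * Dl α) := by rw [hi]
        _ = (P α * P α) * (Di β * Dl α) := by noncomm_ring
        _ = P α * Di β * Dl α := by rw [hI α, mul_assoc]
  have G1 : ∀ β, P α * P β * (P α * Dl α - Dl α) = 0 := by
    intro β
    by_cases hβ : β = α
    · simp only [hβ, hI α]
      rw [mul_sub, ← mul_assoc, hI α, sub_self]
    · rw [hO α β (Ne.symm hβ), zero_mul]
  have G2 : ∀ β, P α * Di β * (P α * Dl α - Dl α) = -(P α * Di β * Dl α) := by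
    intro β
    rw [mul_sub, ← mul_assoc, h2 β, zero_mul, zero_sub]
  -- Term 1
  have T1 : P α * ((∑ β, P β * Di β) * (∑ β, (cl β • P β + lamx β • Dl β))) * P α
      = ∑ β, lamx β • (P α * Di β * Dl α) := by
    rw [← mul_assoc, E1, Finset.mul_sum, Finset.sum_mul]
    refine Finset.sum_congr rfl fun β _ => ?_
    rw [mul_add, add_mul, mul_smul_comm, mul_smul_comm, smul_mul_assoc, smul_mul_assoc,
      F1 β, F2 β, smul_zero, zero_add]
  -- Term 2
  have T2 : P α * ((∑ β, (ci β • P β + lamx β • Di β)) * (∑ β, P β * Dl β)) * P α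
      = -∑ β, lamx β • (P α * Di β * Dl α) := by
    rw [← mul_assoc, mul_assoc _ _ (P α), E2, Finset.mul_sum, Finset.sum_mul,
      ← Finset.sum_neg_distrib]
    refine Finset.sum_congr rfl fun β _ => ?_
    rw [mul_add, add_mul, mul_smul_comm, mul_smul_comm, smul_mul_assoc, smul_mul_assoc,
      G1 β, G2 β, smul_zero, zero_add, smul_neg]
  calc P α * ((∑ β, P β * Di β) * (∑ β, (cl β • P β + lamx β • Dl β))
        - (∑ β, (ci β • P β + lamx β • Di β)) * (∑ β, P β * Dl β)) * P α
      = P α * ((∑ β, P β * Di β) * (∑ β, (cl β • P β + lamx β • Dl β))) * P α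
        - P α * ((∑ β, (ci β • P β + lamx β • Di β)) * (∑ β, P β * Dl β)) * P α := by
        rw [mul_sub, sub_mul]
    _ = (2 : ℝ) • ∑ β, lamx β • (P α * Di β * Dl α) := by
        rw [T1, T2, sub_neg_eq_add, two_smul]

section Analytic

attribute [local instance]
  Matrix.linftyOpNormedAddCommGroup Matrix.linftyOpNormedSpace
  Matrix.linftyOpNormedRing Matrix.linftyOpNormedAlgebra

variable {m n : ℕ} {x : EuclideanSpace ℝ (Fin m)}

/-- Leibniz rule for the partial derivative `mpd`. -/
lemma mpd_mul (i : Fin m)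
    {X Y : EuclideanSpace ℝ (Fin m) → Matrix (Fin n) (Fin n) ℂ}
    (hX : DifferentiableAt ℝ X x) (hY : DifferentiableAt ℝ Y x) :
    mpd i (fun y => X y * Y y) x = mpd i X x * Y x + X x * mpd i Y x := by
  unfold mpd
  have h := congrArg (fun L => L (EuclideanSpace.single i 1)) (fderiv_fun_mul' hX hY)
  simp only [ContinuousLinearMap.add_apply, ContinuousLinearMap.smul_apply,
    ContinuousLinearMap.smulRight_apply, smul_eq_mul, MulOpposite.smul_eq_mul_unop,
    MulOpposite.unop_op] at h
  rw [add_comm]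
  exact h

/-- Leibniz rule for the covariant derivative `cd`. -/
lemma cd_mul (Γ : Fin m → EuclideanSpace ℝ (Fin m) → Matrix (Fin n) (Fin n) ℂ)
    (i : Fin m)
    {X Y : EuclideanSpace ℝ (Fin m) → Matrix (Fin n) (Fin n) ℂ}
    (hX : DifferentiableAt ℝ X x) (hY : DifferentiableAt ℝ Y x) :
    cd Γ i (fun y => X y * Y y) x = cd Γ i X x * Y x + X x * cd Γ i Y x := by
  unfold cd
  rw [mpd_mul i hX hY]
  noncomm_ring

end Analytic

/-- first correction term at order ħ:
`π_α (γ_i (∇_l H_0) − (∇_i H_0) γ_l) π_α = 2 ∑_β λ_β π_α (∇_i π_β)(∇_l π_α)`. -/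
theorem first_order_correction_term_one
    (m n r : ℕ) (U : Set (EuclideanSpace ℝ (Fin m))) (hU : IsOpen U)
    (π : Fin r → EuclideanSpace ℝ (Fin m) → Matrix (Fin n) (Fin n) ℂ)
    (hπ : ∀ α, ContDiffOn ℝ (⊤ : ℕ∞) (π α) U)
    (Γ : Fin m → EuclideanSpace ℝ (Fin m) → Matrix (Fin n) (Fin n) ℂ)
    (hΓ : ∀ i, ContDiffOn ℝ (⊤ : ℕ∞) (Γ i) U)
    (horth : ∀ x ∈ U, ∀ α β, α ≠ β → π α x * π β x = 0)
    (hidem : ∀ x ∈ U, ∀ α, π α x * π α x = π α x)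
    (hsum : ∀ x ∈ U, ∑ α, π α x = 1)
    (lam : Fin r → EuclideanSpace ℝ (Fin m) → ℝ)
    (hlam : ∀ α, ContDiffOn ℝ (⊤ : ℕ∞) (lam α) U)
    (H₀ : EuclideanSpace ℝ (Fin m) → Matrix (Fin n) (Fin n) ℂ)
    (hH₀ : ∀ y, H₀ y = ∑ β, lam β y • π β y) :
    ∀ x ∈ U, ∀ (α : Fin r) (i l : Fin m),
      π α x * (berryGamma Γ π i x * cd Γ l H₀ x
          - cd Γ i H₀ x * berryGamma Γ π l x) * π α x
        = (2 : ℝ) • ∑ β, lam β x • (π α x * cd Γ i (π β) x * cd Γ l (π α) x) := by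
  intro x hx α i l
  -- differentiability at x
  have hmem : U ∈ nhds x := hU.mem_nhds hx
  have hπd : ∀ β, DifferentiableAt ℝ (π β) x := fun β =>
    ((hπ β).differentiableOn (by simp)).differentiableAt hmem
  have hlamd : ∀ β, DifferentiableAt ℝ (lam β) x := fun β =>
    ((hlam β).differentiableOn (by simp)).differentiableAt hmem
  -- notation
  -- vanishing of covariant derivative of products which are constant on U
  have hcd_orth : ∀ (j : Fin m) (β γ : Fin r), β ≠ γ →
      cd Γ j (fun y => π β y * π γ y) x = 0 := by
    intro j β γ hbg
    have hev : (fun y => π β y * π γ y)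
        =ᶠ[nhds x] (fun _ => (0 : Matrix (Fin n) (Fin n) ℂ)) := by
      filter_upwards [hmem] with y hy using horth y hy β γ hbg
    unfold cd mpd
    rw [hev.fderiv_eq, fderiv_const_apply]
    simp [horth x hx β γ hbg]
  have hcd_idem : ∀ (j : Fin m) (β : Fin r),
      cd Γ j (fun y => π β y * π β y) x = cd Γ j (π β) x := by
    intro j β
    have hev : (fun y => π β y * π β y) =ᶠ[nhds x] (π β) := by
      filter_upwards [hmem] with y hy using hidem y hy β
    unfold cd mpd
    rw [hev.fderiv_eq]
    simp [hidem x hx β]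
  -- structure equations
  have hA : ∀ (j : Fin m) (β γ : Fin r), β ≠ γ →
      cd Γ j (π β) x * π γ x + π β x * cd Γ j (π γ) x = 0 := by
    intro j β γ hbg
    rw [← cd_mul Γ j (hπd β) (hπd γ)]
    exact hcd_orth j β γ hbg
  have hB : ∀ (j : Fin m) (β : Fin r),
      cd Γ j (π β) x * π β x + π β x * cd Γ j (π β) x = cd Γ j (π β) x := by
    intro j β
    rw [← cd_mul Γ j (hπd β) (hπd β)]
    exact hcd_idem j β
  -- covariant derivative of H₀
  have hcdH : ∀ (j : Fin m), cd Γ j H₀ x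
      = ∑ β, ((fderiv ℝ (lam β) x (EuclideanSpace.single j 1)) • π β x
          + lam β x • cd Γ j (π β) x) := by
    intro j
    have hfun : H₀ = fun y => ∑ β, lam β y • π β y := funext hH₀
    rw [hfun]
    unfold cd mpd
    rw [show (fderiv ℝ (fun y => ∑ β, lam β y • π β y) x) (EuclideanSpace.single j 1)
        = ∑ β, (fderiv ℝ (fun y => lam β y • π β y) x) (EuclideanSpace.single j 1) from by
      have h := congrArg (fun L => L (EuclideanSpace.single j 1))
        (fderiv_fun_sum (u := Finset.univ) (A := fun β y => lam β y • π β y)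
          (fun β _ => (hlamd β).smul (hπd β)))
      simp only [ContinuousLinearMap.sum_apply] at h
      exact h]
    have heach : ∀ β : Fin r,
        (fderiv ℝ (fun y => lam β y • π β y) x) (EuclideanSpace.single j 1)
          = lam β x • (fderiv ℝ (π β) x) (EuclideanSpace.single j 1)
            + (fderiv ℝ (lam β) x (EuclideanSpace.single j 1)) • π β x := by
      intro β
      have h := congrArg (fun L => L (EuclideanSpace.single j 1))
        (fderiv_fun_smul (hlamd β) (hπd β))
      simp [ContinuousLinearMap.add_apply, ContinuousLinearMap.smul_apply,
        ContinuousLinearMap.smulRight_apply] at h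
      exact h
    rw [Finset.sum_congr rfl fun β _ => heach β]
    rw [Finset.mul_sum, Finset.sum_mul, ← Finset.sum_sub_distrib, ← Finset.sum_add_distrib]
    refine Finset.sum_congr rfl fun β _ => ?_
    rw [mul_smul_comm, smul_mul_assoc, ← smul_sub, smul_add]
    abel
  -- assemble and conclude by pure algebra
  have hkey := key_algebra (R := Matrix (Fin n) (Fin n) ℂ) α (fun β => π β x)
    (fun β => cd Γ i (π β) x) (fun β => cd Γ l (π β) x)
    (fun β => fderiv ℝ (lam β) x (EuclideanSpace.single i 1))
    (fun β => fderiv ℝ (lam β) x (EuclideanSpace.single l 1))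
    (fun β => lam β x)
    (fun β => hidem x hx β) (fun β γ h => horth x hx β γ h) (hsum x hx)
    (fun β γ h => hA i β γ h) (fun β γ h => hA l β γ h)
    (fun β => hB i β) (fun β => hB l β)
  simp only [berryGamma, hcdH i, hcdH l]
  exact hkey
end

section
/- For every α and all coordinate directions i, l, pointwise on U: π_α (γ_i [γ_l, H_0] − [γ_i, H_0] γ_l) π_α = −2 ∑_γ λ_γ π_α (∇_i π_γ)(∇_l π_α). (This is the second correction term at order ħ in the block-diagonalized Hamiltonian symbol.) -/
open Matrix

attribute [local instance]
  Matrix.linftyOpNormedAddCommGroup Matrix.linftyOpNormedSpace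

section Aux

attribute [local instance] Matrix.linftyOpNormedRing Matrix.linftyOpNormedAlgebra

/-- Leibniz rule for the coordinate partial derivative. -/
lemma mpd_mul_aux {m n : ℕ} (i : Fin m)
    {X Y : EuclideanSpace ℝ (Fin m) → Matrix (Fin n) (Fin n) ℂ}
    {x : EuclideanSpace ℝ (Fin m)}
    (hX : DifferentiableAt ℝ X x) (hY : DifferentiableAt ℝ Y x) :
    mpd i (fun y => X y * Y y) x = mpd i X x * Y x + X x * mpd i Y x := by
  unfold mpd
  have h := congrArg (fun L => L (EuclideanSpace.single i 1)) (fderiv_fun_mul' hX hY)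
  simp only [ContinuousLinearMap.add_apply, ContinuousLinearMap.smul_apply] at h
  refine h.trans ?_
  simp [smul_eq_mul, mul_comm]
  rw [add_comm]
  rfl

/-- If two functions agree on an open set, `mpd` agrees at its points. -/
lemma mpd_congr_aux {m n : ℕ} (i : Fin m)
    {X Y : EuclideanSpace ℝ (Fin m) → Matrix (Fin n) (Fin n) ℂ}
    {U : Set (EuclideanSpace ℝ (Fin m))} (hU : IsOpen U)
    {x : EuclideanSpace ℝ (Fin m)} (hx : x ∈ U) (h : Set.EqOn X Y U) :
    mpd i X x = mpd i Y x := by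
  unfold mpd
  have heq : X =ᶠ[nhds x] Y := Filter.eventuallyEq_of_mem (hU.mem_nhds hx) h
  rw [heq.fderiv_eq]

/-- Leibniz rule for the covariant derivative. -/
lemma cd_mul_aux {m n : ℕ}
    (Γ : Fin m → EuclideanSpace ℝ (Fin m) → Matrix (Fin n) (Fin n) ℂ) (i : Fin m)
    {X Y : EuclideanSpace ℝ (Fin m) → Matrix (Fin n) (Fin n) ℂ}
    {x : EuclideanSpace ℝ (Fin m)}
    (hX : DifferentiableAt ℝ X x) (hY : DifferentiableAt ℝ Y x) :
    cd Γ i (fun y => X y * Y y) x = cd Γ i X x * Y x + X x * cd Γ i Y x := by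
  unfold cd
  rw [mpd_mul_aux i hX hY]
  noncomm_ring

end Aux

section Abstract
variable {M : Type*} [Ring M] [Module ℝ M] [SMulCommClass ℝ M M] [IsScalarTower ℝ M M]
variable {r : ℕ}

omit [Module ℝ M] [SMulCommClass ℝ M M] [IsScalarTower ℝ M M] in
lemma sand_zero (P D : Fin r → M) (α : Fin r)
    (hPP : ∀ β, P β * P β = P β)
    (hPO : ∀ β γ, β ≠ γ → P β * P γ = 0)
    (hD : ∀ β, D β * P β + P β * D β = D β)
    (hDo : ∀ β γ, β ≠ γ → D β * P γ + P β * D γ = 0) :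
    ∀ γ, P α * D γ * P α = 0 := by
  intro γ
  by_cases h : γ = α
  · subst h
    have h1 : P γ * (D γ * P γ) + P γ * (P γ * D γ) = P γ * D γ := by
      rw [← mul_add, hD γ]
    rw [← mul_assoc, ← mul_assoc, hPP] at h1
    have h2 : P γ * D γ * P γ = P γ * D γ - P γ * D γ := by
      rw [eq_sub_iff_add_eq]; exact h1
    rw [sub_self] at h2; exact h2
  · have h1 : D γ * P α = -(P γ * D α) := by
      rw [eq_neg_iff_add_eq_zero]; exact hDo γ α h
    rw [mul_assoc, h1, mul_neg, ← mul_assoc, hPO α γ (Ne.symm h), zero_mul, neg_zero]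

omit [Module ℝ M] [SMulCommClass ℝ M M] [IsScalarTower ℝ M M] in
lemma dap (P D : Fin r → M) (α : Fin r)
    (hPP : ∀ β, P β * P β = P β)
    (hPO : ∀ β γ, β ≠ γ → P β * P γ = 0)
    (hD : ∀ β, D β * P β + P β * D β = D β)
    (hDo : ∀ β γ, β ≠ γ → D β * P γ + P β * D γ = 0) :
    ∀ γ, P α * D α * P γ = (if γ = α then P α * D α else 0) - P α * D γ := by
  intro γ
  by_cases h : γ = α
  · subst h; rw [if_pos rfl, sub_self]; exact sand_zero P D γ hPP hPO hD hDo γ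
  · have h1 : D α * P γ = -(P α * D γ) := by
      rw [eq_neg_iff_add_eq_zero]; exact hDo α γ (Ne.symm h)
    rw [mul_assoc, h1, mul_neg, ← mul_assoc, hPP, if_neg h, zero_sub]

lemma key_abstract (P D E : Fin r → M) (c : Fin r → ℝ) (α : Fin r)
    (hPP : ∀ β, P β * P β = P β)
    (hPO : ∀ β γ, β ≠ γ → P β * P γ = 0)
    (hP1 : ∑ β, P β = 1)
    (hD : ∀ β, D β * P β + P β * D β = D β)
    (hDo : ∀ β γ, β ≠ γ → D β * P γ + P β * D γ = 0)
    (hE : ∀ β, E β * P β + P β * E β = E β)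
    (hEo : ∀ β γ, β ≠ γ → E β * P γ + P β * E γ = 0) :
    P α * ((∑ β, P β * D β) * ((∑ β, P β * E β) * (∑ β, c β • P β)
            - (∑ β, c β • P β) * (∑ β, P β * E β))
        - ((∑ β, P β * D β) * (∑ β, c β • P β)
            - (∑ β, c β • P β) * (∑ β, P β * D β)) * (∑ β, P β * E β)) * P α
      = -((2:ℝ) • ∑ γ, c γ • (P α * D γ * E α)) := by
  have h5D := sand_zero P D α hPP hPO hD hDo
  have h5E := sand_zero P E α hPP hPO hE hEo
  set gi := ∑ β, P β * D β with hgi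
  set gl := ∑ β, P β * E β with hgl
  set H := ∑ β, c β • P β with hH
  have h1 : P α * gi = P α * D α := by
    rw [hgi, Finset.mul_sum, Finset.sum_eq_single α
      (fun b _ hb => by rw [← mul_assoc, hPO α b (Ne.symm hb), zero_mul])
      (by simp), ← mul_assoc, hPP]
  have h2 : gl * P α = P α * E α - E α := by
    have herase : ∑ β ∈ Finset.univ.erase α, P β = 1 - P α := by
      rw [eq_sub_iff_add_eq, Finset.sum_erase_add _ _ (Finset.mem_univ α), hP1]
    rw [hgl, Finset.sum_mul, ← Finset.sum_erase_add _ _ (Finset.mem_univ α)]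
    have hterm : ∀ β ∈ Finset.univ.erase α, P β * E β * P α = -(P β * E α) := by
      intro β hβ
      have hβα : β ≠ α := Finset.ne_of_mem_erase hβ
      have h1' : E β * P α = -(P β * E α) := by
        rw [eq_neg_iff_add_eq_zero]; exact hEo β α hβα
      rw [mul_assoc, h1', mul_neg, ← mul_assoc, hPP]
    rw [Finset.sum_congr rfl hterm, h5E α]
    rw [Finset.sum_neg_distrib, ← Finset.sum_mul, herase]
    rw [sub_mul, one_mul, neg_sub, add_zero]
  have h3 : H * P α = c α • P α := by
    rw [hH, Finset.sum_mul, Finset.sum_eq_single α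
      (fun b _ hb => by rw [smul_mul_assoc, hPO b α hb, smul_zero])
      (by simp), smul_mul_assoc, hPP]
  have h3' : P α * H = c α • P α := by
    rw [hH, Finset.mul_sum, Finset.sum_eq_single α
      (fun b _ hb => by rw [mul_smul_comm, hPO α b (Ne.symm hb), smul_zero])
      (by simp), mul_smul_comm, hPP]
  have h4 : P α * D α * H = c α • (P α * D α) - ∑ γ, c γ • (P α * D γ) := by
    rw [hH, Finset.mul_sum]
    have : ∀ γ ∈ Finset.univ, P α * D α * (c γ • P γ)
        = c γ • ((if γ = α then P α * D α else 0) - P α * D γ) := by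
      intro γ _
      rw [mul_smul_comm, dap P D α hPP hPO hD hDo γ]
    rw [Finset.sum_congr rfl this]
    simp only [smul_sub]
    rw [Finset.sum_sub_distrib]
    congr 1
    simp [Finset.sum_ite_eq]
  have hA : (∑ γ, c γ • (P α * D γ)) * P α = 0 := by
    rw [Finset.sum_mul]
    exact Finset.sum_eq_zero fun γ _ => by rw [smul_mul_assoc, h5D γ, smul_zero]
  have hB : (∑ γ, c γ • (P α * D γ)) * E α = ∑ γ, c γ • (P α * D γ * E α) := by
    rw [Finset.sum_mul]
    exact Finset.sum_congr rfl fun γ _ => by rw [smul_mul_assoc]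
  set S := ∑ γ, c γ • (P α * D γ * E α) with hS
  set X := P α * D α * E α with hX
  have hAE : P α * D α * (P α * E α - E α) = -X := by
    rw [mul_sub, ← mul_assoc, h5D α, zero_mul, zero_sub, hX]
  have expand : P α * (gi * (gl * H - H * gl) - (gi * H - H * gi) * gl) * P α
      = (P α * gi) * (gl * (H * P α)) - ((P α * gi) * H) * (gl * P α)
        - ((P α * gi) * H) * (gl * P α) + (P α * H) * (gi * (gl * P α)) := by
    noncomm_ring
  rw [expand, h1, h2, h3, h3', h4]
  have t1 : P α * D α * (gl * (c α • P α)) = -(c α • X) := by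
    rw [mul_smul_comm, h2, mul_smul_comm, hAE, smul_neg]
  have t2 : (c α • (P α * D α) - ∑ γ, c γ • (P α * D γ)) * (P α * E α - E α)
      = -(c α • X) + S := by
    rw [sub_mul, smul_mul_assoc, hAE, mul_sub, ← mul_assoc, hA, zero_mul, hB,
      zero_sub, smul_neg, sub_neg_eq_add]
  have t4 : (c α • P α) * (gi * (P α * E α - E α)) = -(c α • X) := by
    rw [smul_mul_assoc, ← mul_assoc, h1, hAE, smul_neg]
  rw [t1, t2, t4]
  rw [two_smul]
  abel

end Abstract

/-- second correction term at order ħ: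
`π_α (γ_i [γ_l, H_0] − [γ_i, H_0] γ_l) π_α = −2 ∑_γ λ_γ π_α (∇_i π_γ)(∇_l π_α)`. -/
theorem first_order_correction_term_two
    (m n r : ℕ) (U : Set (EuclideanSpace ℝ (Fin m))) (hU : IsOpen U)
    (π : Fin r → EuclideanSpace ℝ (Fin m) → Matrix (Fin n) (Fin n) ℂ)
    (hπ : ∀ α, ContDiffOn ℝ (⊤ : ℕ∞) (π α) U)
    (Γ : Fin m → EuclideanSpace ℝ (Fin m) → Matrix (Fin n) (Fin n) ℂ)
    (hΓ : ∀ i, ContDiffOn ℝ (⊤ : ℕ∞) (Γ i) U)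
    (horth : ∀ x ∈ U, ∀ α β, α ≠ β → π α x * π β x = 0)
    (hidem : ∀ x ∈ U, ∀ α, π α x * π α x = π α x)
    (hsum : ∀ x ∈ U, ∑ α, π α x = 1)
    (lam : Fin r → EuclideanSpace ℝ (Fin m) → ℝ)
    (hlam : ∀ α, ContDiffOn ℝ (⊤ : ℕ∞) (lam α) U)
    (H₀ : EuclideanSpace ℝ (Fin m) → Matrix (Fin n) (Fin n) ℂ)
    (hH₀ : ∀ y, H₀ y = ∑ β, lam β y • π β y) :
    ∀ x ∈ U, ∀ (α : Fin r) (i l : Fin m),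
      π α x * (berryGamma Γ π i x *
            (berryGamma Γ π l x * H₀ x - H₀ x * berryGamma Γ π l x)
          - (berryGamma Γ π i x * H₀ x - H₀ x * berryGamma Γ π i x) *
            berryGamma Γ π l x) * π α x
        = -((2 : ℝ) • ∑ γ, lam γ x • (π α x * cd Γ i (π γ) x * cd Γ l (π α) x)) := by
  intro x hx α i l
  have hdiff : ∀ β, DifferentiableAt ℝ (π β) x := fun β =>
    ((hπ β).contDiffAt (hU.mem_nhds hx)).differentiableAt (by simp)
  -- Leibniz-derived identities for the covariant derivative of the projections
  have hLeib : ∀ (j : Fin m) (β : Fin r),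
      cd Γ j (π β) x * π β x + π β x * cd Γ j (π β) x = cd Γ j (π β) x := by
    intro j β
    have hcong : cd Γ j (fun y => π β y * π β y) x = cd Γ j (π β) x := by
      unfold cd
      rw [mpd_congr_aux j hU hx (fun y hy => hidem y hy β)]
      simp only [hidem x hx β]
    conv_rhs => rw [← hcong]
    rw [cd_mul_aux Γ j (hdiff β) (hdiff β)]
  have hLeibO : ∀ (j : Fin m) (β γ : Fin r), β ≠ γ →
      cd Γ j (π β) x * π γ x + π β x * cd Γ j (π γ) x = 0 := by
    intro j β γ hβγ
    have hcong : cd Γ j (fun y => π β y * π γ y) x = 0 := by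
      unfold cd
      rw [mpd_congr_aux j hU hx (fun y hy => horth y hy β γ hβγ)]
      have h0 : mpd j (fun _ : EuclideanSpace ℝ (Fin m) => (0 : Matrix (Fin n) (Fin n) ℂ)) x = 0 := by
        unfold mpd
        rw [fderiv_fun_const]
        simp
      simp only [horth x hx β γ hβγ, h0, mul_zero, zero_mul, sub_zero, add_zero]
    conv_rhs => rw [← hcong]
    rw [cd_mul_aux Γ j (hdiff β) (hdiff γ)]
  rw [hH₀]
  show π α x * ((∑ β, π β x * cd Γ i (π β) x) *
        ((∑ β, π β x * cd Γ l (π β) x) * (∑ β, lam β x • π β x)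
          - (∑ β, lam β x • π β x) * (∑ β, π β x * cd Γ l (π β) x))
      - ((∑ β, π β x * cd Γ i (π β) x) * (∑ β, lam β x • π β x)
          - (∑ β, lam β x • π β x) * (∑ β, π β x * cd Γ i (π β) x))
        * (∑ β, π β x * cd Γ l (π β) x)) * π α x = _
  exact key_abstract (fun β => π β x) (fun β => cd Γ i (π β) x)
    (fun β => cd Γ l (π β) x) (fun β => lam β x) α
    (hidem x hx) (horth x hx) (hsum x hx)
    (hLeib i) (hLeibO i) (hLeib l) (hLeibO l)
end

section
/- For every α and all coordinate directions i, l, pointwise on U: π_α ( γ_i (∇_l H_0) − (∇_i H_0) γ_l + ½ ( γ_i [γ_l, H_0] − [γ_i, H_0] γ_l ) ) π_α = ∑_γ λ_γ π_α (∇_i π_γ)(∇_l π_α). (Contracted with (iħ/2)ω^{il}, where ω^{il} is the Poisson tensor, the right-hand side is the paper's total correction at order ħ to the α-th diagonal block of the Hamiltonian symbol for the Berry-type connection: π_α H^{(1)} π_α = π_α H^{(0)} π_α + (iħ/2) ω^{il} ∑_γ λ_γ π_α (∇_i π_γ)(∇_l π_α).) -/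
open Matrix

attribute [local instance]
  Matrix.linftyOpNormedAddCommGroup Matrix.linftyOpNormedSpace

open Finset in
lemma key_alg {n r : ℕ}
    (P A B : Fin r → Matrix (Fin n) (Fin n) ℂ) (lam c d : Fin r → ℝ)
    (horth : ∀ a b, a ≠ b → P a * P b = 0)
    (hidem : ∀ a, P a * P a = P a)
    (hsum : ∑ a, P a = 1)
    (hA : ∀ a b, A a * P b + P a * A b = if a = b then A a else 0)
    (hB : ∀ a b, B a * P b + P a * B b = if a = b then B a else 0)
    (α : Fin r) :
    P α * ((∑ β, P β * A β) * (∑ γ, (d γ • P γ + lam γ • B γ))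
        - (∑ γ, (c γ • P γ + lam γ • A γ)) * (∑ β, P β * B β)
        + (2:ℝ)⁻¹ • ((∑ β, P β * A β) *
            ((∑ β, P β * B β) * (∑ γ, lam γ • P γ)
              - (∑ γ, lam γ • P γ) * (∑ β, P β * B β))
          - ((∑ β, P β * A β) * (∑ γ, lam γ • P γ)
              - (∑ γ, lam γ • P γ) * (∑ β, P β * A β)) * (∑ β, P β * B β))) * P α
    = ∑ γ, lam γ • (P α * A γ * B α) := by
  have idemL : ∀ a (y : Matrix (Fin n) (Fin n) ℂ), P a * (P a * y) = P a * y := by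
    intro a y; rw [← mul_assoc, hidem]
  have relXa : ∀ (X : Fin r → Matrix (Fin n) (Fin n) ℂ),
      (∀ a b, X a * P b + P a * X b = if a = b then X a else 0) →
      ∀ a, X a * P a = X a - P a * X a := by
    intro X hX a
    have h1 := hX a a
    rw [if_pos rfl] at h1
    exact eq_sub_of_add_eq h1
  have relXne : ∀ (X : Fin r → Matrix (Fin n) (Fin n) ℂ),
      (∀ a b, X a * P b + P a * X b = if a = b then X a else 0) →
      ∀ a b, a ≠ b → X a * P b = -(P a * X b) := by
    intro X hX a b hab
    have h1 := hX a b
    rw [if_neg hab] at h1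
    exact eq_neg_of_add_eq_zero_left h1
  -- P a * (X b * P a) = 0
  have pXp : ∀ (X : Fin r → Matrix (Fin n) (Fin n) ℂ),
      (∀ a b, X a * P b + P a * X b = if a = b then X a else 0) →
      ∀ a b, P a * (X b * P a) = 0 := by
    intro X hX a b
    by_cases hab : b = a
    · subst hab
      rw [relXa X hX b, mul_sub, idemL]
      exact sub_self _
    · rw [relXne X hX b a hab, mul_neg, ← mul_assoc, horth a b (Ne.symm hab), zero_mul,
        neg_zero]
  -- P a * g = P a * A a
  have Pg : ∀ (X : Fin r → Matrix (Fin n) (Fin n) ℂ) a, P a * (∑ β, P β * X β) = P a * X a := by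
    intro X a
    rw [Finset.mul_sum]
    rw [Finset.sum_eq_single a]
    · rw [← mul_assoc, hidem]
    · intro b _ hb
      rw [← mul_assoc, horth a b (Ne.symm hb), zero_mul]
    · simp
  -- g * P a = P a * A a - A a
  have gP : ∀ (X : Fin r → Matrix (Fin n) (Fin n) ℂ),
      (∀ a b, X a * P b + P a * X b = if a = b then X a else 0) →
      ∀ a, (∑ β, P β * X β) * P a = P a * X a - X a := by
    intro X hX a
    rw [Finset.sum_mul]
    have step : ∀ β, (P β * X β) * P a
        = (if β = a then P a * X a else 0) - P β * X a := by
      intro β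
      by_cases hb : β = a
      · subst hb
        rw [if_pos rfl, mul_assoc, relXa X hX β, mul_sub, idemL]
      · rw [if_neg hb, mul_assoc, relXne X hX β a hb, mul_neg, idemL, zero_sub]
    rw [Finset.sum_congr rfl (fun β _ => step β), Finset.sum_sub_distrib,
      Finset.sum_ite_eq' Finset.univ a (fun _ => P a * X a), if_pos (Finset.mem_univ a),
      ← Finset.sum_mul, hsum, one_mul]
  -- zero annihilation helper
  have zXz : ∀ (X : Fin r → Matrix (Fin n) (Fin n) ℂ),
      (∀ a b, X a * P b + P a * X b = if a = b then X a else 0) →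
      ∀ b (y : Matrix (Fin n) (Fin n) ℂ), P α * (X b * (P α * y)) = 0 := by
    intro X hX b y
    have h0 := pXp X hX α b
    calc P α * (X b * (P α * y)) = (P α * (X b * P α)) * y := by
          rw [mul_assoc, mul_assoc]
      _ = 0 := by rw [h0, zero_mul]
  -- commutator with H
  have commH : ∀ (X : Fin r → Matrix (Fin n) (Fin n) ℂ),
      (∀ a b, X a * P b + P a * X b = if a = b then X a else 0) →
      (∑ β, P β * X β) * (∑ γ, lam γ • P γ)
        - (∑ γ, lam γ • P γ) * (∑ β, P β * X β) = -∑ γ, lam γ • X γ := by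
    intro X hX
    rw [Finset.mul_sum, Finset.sum_mul]
    simp only [mul_smul_comm, smul_mul_assoc]
    rw [← Finset.sum_sub_distrib, ← Finset.sum_neg_distrib]
    refine Finset.sum_congr rfl fun γ _ => ?_
    rw [gP X hX γ, Pg X γ, smul_sub, sub_sub_cancel_left]
  -- core identities
  have E1core : ∀ γ, (P α * A α) * (B γ * P α) = P α * (A γ * B α) := by
    intro γ
    by_cases hga : γ = α
    · subst hga
      rw [relXa B hB γ, mul_sub, mul_assoc (P γ) (A γ) (P γ * B γ),
        zXz A hA γ (B γ), sub_zero, mul_assoc]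
    · rw [relXne B hB γ α hga, mul_neg, mul_assoc (P α) (A α),
        ← mul_assoc (A α), relXne A hA α γ (fun h => hga h.symm), neg_mul, mul_neg,
        neg_neg, mul_assoc (P α) (A γ), idemL]
  have E2core : ∀ γ, (P α * A γ) * ((∑ β, P β * B β) * P α)
      = -(P α * (A γ * B α)) := by
    intro γ
    rw [gP B hB α, mul_sub, mul_assoc (P α) (A γ) (P α * B α),
      zXz A hA γ (B α), zero_sub, mul_assoc]
  -- the four sandwiched pieces
  have p1 : P α * ((∑ β, P β * A β) * (∑ γ, (d γ • P γ + lam γ • B γ))) * P α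
      = ∑ γ, lam γ • (P α * A γ * B α) := by
    calc P α * ((∑ β, P β * A β) * (∑ γ, (d γ • P γ + lam γ • B γ))) * P α
        = (P α * (∑ β, P β * A β)) * ((∑ γ, (d γ • P γ + lam γ • B γ)) * P α) := by
          rw [← mul_assoc, mul_assoc]
      _ = (P α * A α) * (∑ γ, (d γ • (P γ * P α) + lam γ • (B γ * P α))) := by
          rw [Pg A α, Finset.sum_mul]
          simp only [add_mul, smul_mul_assoc]
      _ = ∑ γ, (d γ • ((P α * A α) * (P γ * P α))
            + lam γ • ((P α * A α) * (B γ * P α))) := by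
          rw [Finset.mul_sum]
          simp only [mul_add, mul_smul_comm]
      _ = ∑ γ, lam γ • (P α * A γ * B α) := by
          refine Finset.sum_congr rfl fun γ _ => ?_
          have hz : (P α * A α) * (P γ * P α) = 0 := by
            by_cases hga : γ = α
            · subst hga
              rw [hidem, mul_assoc]
              exact pXp A hA γ γ
            · rw [horth γ α hga, mul_zero]
          rw [hz, smul_zero, zero_add, E1core γ, ← mul_assoc]
  have p2 : P α * ((∑ γ, (c γ • P γ + lam γ • A γ)) * (∑ β, P β * B β)) * P α
      = -∑ γ, lam γ • (P α * A γ * B α) := by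
    calc P α * ((∑ γ, (c γ • P γ + lam γ • A γ)) * (∑ β, P β * B β)) * P α
        = (P α * (∑ γ, (c γ • P γ + lam γ • A γ))) * ((∑ β, P β * B β) * P α) := by
          rw [← mul_assoc, mul_assoc]
      _ = (∑ γ, (c γ • (P α * P γ) + lam γ • (P α * A γ))) * ((∑ β, P β * B β) * P α) := by
          rw [Finset.mul_sum]
          simp only [mul_add, mul_smul_comm]
      _ = ∑ γ, (c γ • ((P α * P γ) * ((∑ β, P β * B β) * P α))
            + lam γ • ((P α * A γ) * ((∑ β, P β * B β) * P α))) := by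
          rw [Finset.sum_mul]
          simp only [add_mul, smul_mul_assoc]
      _ = ∑ γ, -(lam γ • (P α * A γ * B α)) := by
          refine Finset.sum_congr rfl fun γ _ => ?_
          have hz : (P α * P γ) * ((∑ β, P β * B β) * P α) = 0 := by
            by_cases hga : γ = α
            · subst hga
              rw [hidem, gP B hB γ, mul_sub, idemL, sub_self]
            · rw [horth α γ (fun h => hga h.symm), zero_mul]
          rw [hz, smul_zero, zero_add, E2core γ, ← mul_assoc, smul_neg]
      _ = -∑ γ, lam γ • (P α * A γ * B α) := Finset.sum_neg_distrib _
  have p3 : P α * ((∑ β, P β * A β) * -∑ γ, lam γ • B γ) * P α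
      = -∑ γ, lam γ • (P α * A γ * B α) := by
    calc P α * ((∑ β, P β * A β) * -∑ γ, lam γ • B γ) * P α
        = (P α * (∑ β, P β * A β)) * ((-∑ γ, lam γ • B γ) * P α) := by
          rw [← mul_assoc, mul_assoc]
      _ = (P α * A α) * (-∑ γ, lam γ • (B γ * P α)) := by
          rw [Pg A α, neg_mul, Finset.sum_mul]
          simp only [smul_mul_assoc]
      _ = -∑ γ, lam γ • ((P α * A α) * (B γ * P α)) := by
          rw [mul_neg, Finset.mul_sum]
          simp only [mul_smul_comm]
      _ = -∑ γ, lam γ • (P α * A γ * B α) := by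
          refine congrArg Neg.neg (Finset.sum_congr rfl fun γ _ => ?_)
          rw [E1core γ, ← mul_assoc]
  have p4 : P α * ((-∑ γ, lam γ • A γ) * (∑ β, P β * B β)) * P α
      = ∑ γ, lam γ • (P α * A γ * B α) := by
    calc P α * ((-∑ γ, lam γ • A γ) * (∑ β, P β * B β)) * P α
        = (P α * -∑ γ, lam γ • A γ) * ((∑ β, P β * B β) * P α) := by
          rw [← mul_assoc, mul_assoc]
      _ = (-∑ γ, lam γ • (P α * A γ)) * ((∑ β, P β * B β) * P α) := by
          rw [mul_neg, Finset.mul_sum]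
          simp only [mul_smul_comm]
      _ = -∑ γ, lam γ • ((P α * A γ) * ((∑ β, P β * B β) * P α)) := by
          rw [neg_mul, Finset.sum_mul]
          simp only [smul_mul_assoc]
      _ = ∑ γ, lam γ • (P α * A γ * B α) := by
          rw [← Finset.sum_neg_distrib]
          refine Finset.sum_congr rfl fun γ _ => ?_
          rw [E2core γ, ← mul_assoc, smul_neg, neg_neg]
  -- assembly
  rw [commH B hB, commH A hA]
  simp only [mul_sub, sub_mul, mul_add, add_mul, mul_smul_comm, smul_mul_assoc] at *
  rw [p1, p2, p3, p4]
  module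


section CdProdRel

attribute [local instance]
  Matrix.linftyOpNormedRing Matrix.linftyOpNormedAlgebra

/-- Leibniz rule for `cd` applied to products of the idempotent family. -/
lemma cd_prod_rel {m n r : ℕ} {U : Set (EuclideanSpace ℝ (Fin m))} (hU : IsOpen U)
    (π : Fin r → EuclideanSpace ℝ (Fin m) → Matrix (Fin n) (Fin n) ℂ)
    (hπ : ∀ α, ContDiffOn ℝ (⊤ : ℕ∞) (π α) U)
    (Γ : Fin m → EuclideanSpace ℝ (Fin m) → Matrix (Fin n) (Fin n) ℂ)
    (horth : ∀ x ∈ U, ∀ α β, α ≠ β → π α x * π β x = 0)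
    (hidem : ∀ x ∈ U, ∀ α, π α x * π α x = π α x)
    {x : EuclideanSpace ℝ (Fin m)} (hx : x ∈ U) (i : Fin m) (a b : Fin r) :
    cd Γ i (π a) x * π b x + π a x * cd Γ i (π b) x
      = if a = b then cd Γ i (π a) x else 0 := by
  have dπ : ∀ β, DifferentiableAt ℝ (π β) x := fun β =>
    ((hπ β).contDiffAt (hU.mem_nhds hx)).differentiableAt (by simp)
  have hmul : mpd i (fun y => π a y * π b y) x
      = mpd i (π a) x * π b x + π a x * mpd i (π b) x := by
    have h := ((dπ a).hasFDerivAt.mul' (dπ b).hasFDerivAt).fderiv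
    have h2 : mpd i (fun y => π a y * π b y) x
        = π a x * mpd i (π b) x + mpd i (π a) x * π b x :=
      congrArg (fun L => L (EuclideanSpace.single i 1)) h
    rw [h2]
    rw [add_comm]
  by_cases hab : a = b
  · subst hab
    have heq : (fun y => π a y * π a y) =ᶠ[nhds x] π a :=
      Filter.eventuallyEq_of_mem (hU.mem_nhds hx) (fun y hy => hidem y hy a)
    have hfd : mpd i (fun y => π a y * π a y) x = mpd i (π a) x := by
      simp only [mpd, heq.fderiv_eq]
    have key1 : mpd i (π a) x * π a x + π a x * mpd i (π a) x = mpd i (π a) x :=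
      hmul.symm.trans hfd
    have comm_part : ∀ (G p : Matrix (Fin n) (Fin n) ℂ), p * p = p →
        (G * p - p * G) * p + p * (G * p - p * G) = G * p - p * G := by
      intro G p hp
      rw [sub_mul, mul_sub, mul_assoc, hp, ← mul_assoc, ← mul_assoc, hp]
      abel
    rw [if_pos rfl]
    show (mpd i (π a) x + (Γ i x * π a x - π a x * Γ i x)) * π a x
        + π a x * (mpd i (π a) x + (Γ i x * π a x - π a x * Γ i x))
        = mpd i (π a) x + (Γ i x * π a x - π a x * Γ i x)
    rw [add_mul, mul_add, add_add_add_comm, key1, comm_part _ _ (hidem x hx a)]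
  · have heq : (fun y => π a y * π b y) =ᶠ[nhds x] (fun _ => 0) :=
      Filter.eventuallyEq_of_mem (hU.mem_nhds hx) (fun y hy => horth y hy a b hab)
    have hfd : mpd i (fun y => π a y * π b y) x = 0 := by
      simp only [mpd, heq.fderiv_eq, fderiv_const]
      simp
    have key0 : mpd i (π a) x * π b x + π a x * mpd i (π b) x = 0 :=
      hmul.symm.trans hfd
    have comm0 : ∀ (G p q : Matrix (Fin n) (Fin n) ℂ), p * q = 0 →
        (G * p - p * G) * q + p * (G * q - q * G) = 0 := by
      intro G p q h
      rw [sub_mul, mul_sub, mul_assoc, h, mul_zero, ← mul_assoc, ← mul_assoc, h,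
        zero_mul]
      abel
    rw [if_neg hab]
    show (mpd i (π a) x + (Γ i x * π a x - π a x * Γ i x)) * π b x
        + π a x * (mpd i (π b) x + (Γ i x * π b x - π b x * Γ i x)) = 0
    rw [add_mul, mul_add, add_add_add_comm, key0,
      comm0 (Γ i x) _ _ (horth x hx a b hab), add_zero]

end CdProdRel

/-- total correction at order ħ to the α-th diagonal block for the
Berry-type connection:
`π_α (γ_i (∇_l H_0) − (∇_i H_0) γ_l + ½(γ_i [γ_l, H_0] − [γ_i, H_0] γ_l)) π_α
  = ∑_γ λ_γ π_α (∇_i π_γ)(∇_l π_α)`. -/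
theorem first_order_correction_total
    (m n r : ℕ) (U : Set (EuclideanSpace ℝ (Fin m))) (hU : IsOpen U)
    (π : Fin r → EuclideanSpace ℝ (Fin m) → Matrix (Fin n) (Fin n) ℂ)
    (hπ : ∀ α, ContDiffOn ℝ (⊤ : ℕ∞) (π α) U)
    (Γ : Fin m → EuclideanSpace ℝ (Fin m) → Matrix (Fin n) (Fin n) ℂ)
    (hΓ : ∀ i, ContDiffOn ℝ (⊤ : ℕ∞) (Γ i) U)
    (horth : ∀ x ∈ U, ∀ α β, α ≠ β → π α x * π β x = 0)
    (hidem : ∀ x ∈ U, ∀ α, π α x * π α x = π α x)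
    (hsum : ∀ x ∈ U, ∑ α, π α x = 1)
    (lam : Fin r → EuclideanSpace ℝ (Fin m) → ℝ)
    (hlam : ∀ α, ContDiffOn ℝ (⊤ : ℕ∞) (lam α) U)
    (H₀ : EuclideanSpace ℝ (Fin m) → Matrix (Fin n) (Fin n) ℂ)
    (hH₀ : ∀ y, H₀ y = ∑ β, lam β y • π β y) :
    ∀ x ∈ U, ∀ (α : Fin r) (i l : Fin m),
      π α x * (berryGamma Γ π i x * cd Γ l H₀ x
          - cd Γ i H₀ x * berryGamma Γ π l x
          + ((2 : ℝ)⁻¹ • (berryGamma Γ π i x *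
              (berryGamma Γ π l x * H₀ x - H₀ x * berryGamma Γ π l x)
            - (berryGamma Γ π i x * H₀ x - H₀ x * berryGamma Γ π i x) *
              berryGamma Γ π l x))) * π α x
        = ∑ γ, lam γ x • (π α x * cd Γ i (π γ) x * cd Γ l (π α) x) := by
  intro x hx α i l
  have dπ : ∀ β, DifferentiableAt ℝ (π β) x := fun β =>
    ((hπ β).contDiffAt (hU.mem_nhds hx)).differentiableAt (by simp)
  have dlam : ∀ β, DifferentiableAt ℝ (lam β) x := fun β =>
    ((hlam β).contDiffAt (hU.mem_nhds hx)).differentiableAt (by simp)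
  -- decomposition of cd Γ j H₀ x
  have hcdH : ∀ (j : Fin m), cd Γ j H₀ x
      = ∑ γ, ((fderiv ℝ (lam γ) x) (EuclideanSpace.single j 1) • π γ x
          + lam γ x • cd Γ j (π γ) x) := by
    intro j
    have hfun : H₀ = fun y => ∑ γ, lam γ y • π γ y := funext hH₀
    have hder : fderiv ℝ H₀ x = ∑ γ, (lam γ x • fderiv ℝ (π γ) x
        + (fderiv ℝ (lam γ) x).smulRight (π γ x)) := by
      rw [hfun]
      erw [fderiv_fun_sum (A := fun γ y => lam γ y • π γ y) (fun γ _ => (dlam γ).smul (dπ γ))]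
      exact Finset.sum_congr rfl fun γ _ => fderiv_smul (dlam γ) (dπ γ)
    have hmpd : mpd j H₀ x = ∑ γ, (lam γ x • mpd j (π γ) x
        + (fderiv ℝ (lam γ) x) (EuclideanSpace.single j 1) • π γ x) := by
      simp only [mpd, hder, ContinuousLinearMap.sum_apply, ContinuousLinearMap.add_apply,
        ContinuousLinearMap.smul_apply, ContinuousLinearMap.smulRight_apply]
    have hcomm : Γ j x * H₀ x - H₀ x * Γ j x
        = ∑ γ, lam γ x • (Γ j x * π γ x - π γ x * Γ j x) := by
      rw [hH₀ x, Finset.mul_sum, Finset.sum_mul, ← Finset.sum_sub_distrib]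
      exact Finset.sum_congr rfl fun γ _ => by
        rw [mul_smul_comm, smul_mul_assoc, smul_sub]
    rw [cd, hmpd, hcomm, ← Finset.sum_add_distrib]
    refine Finset.sum_congr rfl fun γ _ => ?_
    rw [cd, smul_add]
    abel
  simp only [berryGamma]
  rw [hcdH i, hcdH l, hH₀ x]
  exact key_alg (fun β => π β x) (fun β => cd Γ i (π β) x) (fun β => cd Γ l (π β) x)
    (fun γ => lam γ x)
    (fun γ => (fderiv ℝ (lam γ) x) (EuclideanSpace.single i 1))
    (fun γ => (fderiv ℝ (lam γ) x) (EuclideanSpace.single l 1))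
    (horth x hx) (hidem x hx) (hsum x hx)
    (fun a b => cd_prod_rel hU π hπ Γ horth hidem hx i a b)
    (fun a b => cd_prod_rel hU π hπ Γ horth hidem hx l a b) α
end

section
/- Define Γ^B_i := ∑_β π_β (∂_i π_β) + ∑_β π_β punkt Γ_i π_β, the connection coefficients of the Berry-type connection ∇^B = ∑_α π_α ∘ ∇ ∘ π_α. Then for every α and every coordinate direction i, pointwise on U: ∂_i π_α + [Γ^B_i, π_α] = 0, i.e., every projection π_α is covariantly constant with respect to the Berry-type connection. (This is the key computational content of Lemma 3, by which the π_α become quantum projections for the Fedosov star product built from ∇^B.) -/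
open Matrix

attribute [local instance]
  Matrix.linftyOpNormedAddCommGroup Matrix.linftyOpNormedSpace

attribute [local instance]
  Matrix.linftyOpNormedRing Matrix.linftyOpNormedAlgebra

/-- with
`Γ^B_i = ∑_β π_β (∂_i π_β) + ∑_β π_β Γ_i π_β` the Berry-type connection
coefficients, every projection is covariantly constant with respect to the
Berry-type connection: `∂_i π_α + [Γ^B_i, π_α] = 0` on `U`. -/
theorem projections_covariantly_constant_for_berry_connection
    (m n r : ℕ) (U : Set (EuclideanSpace ℝ (Fin m))) (hU : IsOpen U)
    (π : Fin r → EuclideanSpace ℝ (Fin m) → Matrix (Fin n) (Fin n) ℂ)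
    (hπ : ∀ α, ContDiffOn ℝ (⊤ : ℕ∞) (π α) U)
    (Γ : Fin m → EuclideanSpace ℝ (Fin m) → Matrix (Fin n) (Fin n) ℂ)
    (hΓ : ∀ i, ContDiffOn ℝ (⊤ : ℕ∞) (Γ i) U)
    (horth : ∀ x ∈ U, ∀ α β, α ≠ β → π α x * π β x = 0)
    (hidem : ∀ x ∈ U, ∀ α, π α x * π α x = π α x)
    (hsum : ∀ x ∈ U, ∑ α, π α x = 1)
    (ΓB : Fin m → EuclideanSpace ℝ (Fin m) → Matrix (Fin n) (Fin n) ℂ)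
    (hΓB : ∀ i x, ΓB i x =
      ∑ β, π β x * mpd i (π β) x + ∑ β, π β x * Γ i x * π β x) :
    ∀ x ∈ U, ∀ (α : Fin r) (i : Fin m),
      mpd i (π α) x + (ΓB i x * π α x - π α x * ΓB i x) = 0 := by

  intro x hx α i
  have hmem : U ∈ nhds x := hU.mem_nhds hx
  have hd : ∀ β, DifferentiableAt ℝ (π β) x := fun β =>
    ((hπ β).contDiffAt hmem).differentiableAt (by simp)
  set D : Fin r → Matrix (Fin n) (Fin n) ℂ := fun β => mpd i (π β) x with hDdef
  -- product rule
  have hprod : ∀ β γ, mpd i (fun y => π β y * π γ y) x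
      = D β * π γ x + π β x * D γ := by
    intro β γ
    have h := ((hd β).hasFDerivAt.mul' (hd γ).hasFDerivAt)
    rw [mpd, show (fun y => π β y * π γ y) = π β * π γ from rfl]
    erw [h.fderiv]
    simp only [hDdef, mpd, h.fderiv, ContinuousLinearMap.add_apply,
      ContinuousLinearMap.smul_apply, ContinuousLinearMap.smulRight_apply,
      smul_eq_mul, op_smul_eq_mul]
    exact add_comm _ _
  -- derivative of an eventually-constant function vanishes
  have hev : ∀ (f : EuclideanSpace ℝ (Fin m) → Matrix (Fin n) (Fin n) ℂ)
      (c : Matrix (Fin n) (Fin n) ℂ), (∀ y ∈ U, f y = c) → mpd i f x = 0 := by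
    intro f c h
    have hfe : f =ᶠ[nhds x] fun _ => c := Filter.eventually_of_mem hmem h
    rw [mpd, hfe.fderiv_eq, fderiv_fun_const]
    simp
  -- differentiated idempotency
  have h1 : ∀ β, D β * π β x + π β x * D β = D β := by
    intro β
    have he : (fun y => π β y * π β y) =ᶠ[nhds x] π β :=
      Filter.eventually_of_mem hmem (fun y hy => hidem y hy β)
    have h := hprod β β
    rw [mpd, he.fderiv_eq] at h
    exact h.symm
  -- differentiated orthogonality
  have h2 : ∀ β, β ≠ α → D β * π α x + π β x * D α = 0 := by
    intro β hβ
    rw [← hprod β α]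
    exact hev _ 0 (fun y hy => horth y hy β α hβ)
  -- π_α D_α π_α = 0
  have h3 : π α x * D α * π α x = 0 := by
    have h := congrArg (fun M => π α x * M) (h1 α)
    simp only [mul_add, ← mul_assoc, hidem x hx α] at h
    exact add_eq_right.mp h
  have key : ∀ β, π β x * D β * π α x + π β x * D α
      = if β = α then π α x * D α else 0 := by
    intro β
    by_cases hβ : β = α
    · subst hβ
      rw [if_pos rfl, h3, zero_add]
    · rw [if_neg hβ]
      have h : D β * π α x = -(π β x * D α) := eq_neg_of_add_eq_zero_left (h2 β hβ)
      rw [mul_assoc, h, mul_neg, ← mul_assoc, hidem x hx β, neg_add_cancel]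
  have hsum1 : ∑ β, (π β x * D β * π α x + π β x * D α) = π α x * D α := by
    simp only [key]
    simp [Finset.sum_ite_eq']
  have hAπ : (∑ β, π β x * D β) * π α x = π α x * D α - D α := by
    rw [Finset.sum_add_distrib, ← Finset.sum_mul, ← Finset.sum_mul,
      hsum x hx, one_mul] at hsum1
    exact eq_sub_of_add_eq hsum1
  have hπA : π α x * (∑ β, π β x * D β) = π α x * D α := by
    rw [Finset.mul_sum]
    have h : ∀ β, π α x * (π β x * D β) = if β = α then π α x * D α else 0 := by
      intro β
      by_cases hβ : β = α
      · subst hβ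
        rw [← mul_assoc, hidem x hx β, if_pos rfl]
      · rw [← mul_assoc, horth x hx α β (fun h => hβ h.symm), zero_mul, if_neg hβ]
    simp only [h]
    simp [Finset.sum_ite_eq']
  have hBπ : (∑ β, π β x * Γ i x * π β x) * π α x = π α x * Γ i x * π α x := by
    rw [Finset.sum_mul]
    have h : ∀ β, π β x * Γ i x * π β x * π α x
        = if β = α then π α x * Γ i x * π α x else 0 := by
      intro β
      by_cases hβ : β = α
      · subst hβ
        rw [mul_assoc, hidem x hx β, if_pos rfl]
      · rw [mul_assoc, horth x hx β α hβ, mul_zero, if_neg hβ]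
    simp only [h]
    simp [Finset.sum_ite_eq']
  have hπB : π α x * (∑ β, π β x * Γ i x * π β x) = π α x * Γ i x * π α x := by
    rw [Finset.mul_sum]
    have h : ∀ β, π α x * (π β x * Γ i x * π β x)
        = if β = α then π α x * Γ i x * π α x else 0 := by
      intro β
      by_cases hβ : β = α
      · subst hβ
        rw [← mul_assoc, ← mul_assoc, hidem x hx β, if_pos rfl]
      · rw [← mul_assoc, ← mul_assoc, horth x hx α β (fun h => hβ h.symm),
          zero_mul, zero_mul, if_neg hβ]
    simp only [h]
    simp [Finset.sum_ite_eq']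
  have hDα : mpd i (π α) x = D α := rfl
  rw [hΓB, hDα, add_mul, mul_add, hAπ, hπA, hBπ, hπB]
  abel
end

section
/- Let ω : Fin m → Fin m → ℝ be antisymmetric (ω_{il} = −ω_{li}), and let Δγ_1, …, Δγ_m : U → Matrix (Fin n) (Fin n) ℂ be smooth maps commuting pointwise with every π_β. Then for every α, pointwise on U: ∑_{i,l} ω_{il} π_α ( Δγ_i (∇_l H_0) − (∇_i H_0) Δγ_l ) π_α = 2 ∑_{i,l} ω_{il} (∂_l λ_α) π_α Δγ_i π_α. (This is the Berry-phase term Δγ(X_{λ_α}) by which the order-ħ corrections of two compatible connections differ; X_{λ_α} is the Hamiltonian vector field of λ_α.) -/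
open Matrix

attribute [local instance]
  Matrix.linftyOpNormedAddCommGroup Matrix.linftyOpNormedSpace

attribute [local instance]
  Matrix.linftyOpNonUnitalNormedRing Matrix.linftyOpNormedRing Matrix.linftyOpNormedAlgebra

/-- for an antisymmetric `ω` and smooth `Δγ_i` commuting pointwise
with every projection `π_β`, for every `α`, pointwise on `U`:
`∑_{i,l} ω_{il} π_α (Δγ_i (∇_l H_0) − (∇_i H_0) Δγ_l) π_α
   = 2 ∑_{i,l} ω_{il} (∂_l λ_α) π_α Δγ_i π_α`
(the Berry-phase term `Δγ(X_{λ_α})` by which order-ħ corrections of two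
compatible connections differ). -/
theorem berry_phase_term_of_compatible_connection_change
    (m n r : ℕ) (U : Set (EuclideanSpace ℝ (Fin m))) (hU : IsOpen U)
    (π : Fin r → EuclideanSpace ℝ (Fin m) → Matrix (Fin n) (Fin n) ℂ)
    (hπ : ∀ α, ContDiffOn ℝ (⊤ : ℕ∞) (π α) U)
    (Γ : Fin m → EuclideanSpace ℝ (Fin m) → Matrix (Fin n) (Fin n) ℂ)
    (hΓ : ∀ i, ContDiffOn ℝ (⊤ : ℕ∞) (Γ i) U)
    (horth : ∀ x ∈ U, ∀ α β, α ≠ β → π α x * π β x = 0)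
    (hidem : ∀ x ∈ U, ∀ α, π α x * π α x = π α x)
    (hsum : ∀ x ∈ U, ∑ α, π α x = 1)
    (lam : Fin r → EuclideanSpace ℝ (Fin m) → ℝ)
    (hlam : ∀ α, ContDiffOn ℝ (⊤ : ℕ∞) (lam α) U)
    (H₀ : EuclideanSpace ℝ (Fin m) → Matrix (Fin n) (Fin n) ℂ)
    (hH₀ : ∀ y, H₀ y = ∑ β, lam β y • π β y)
    (ω : Fin m → Fin m → ℝ) (hω : ∀ i l, ω i l = - ω l i)
    (Δγ : Fin m → EuclideanSpace ℝ (Fin m) → Matrix (Fin n) (Fin n) ℂ)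
    (hΔγ : ∀ i, ContDiffOn ℝ (⊤ : ℕ∞) (Δγ i) U)
    (hcomm : ∀ i, ∀ x ∈ U, ∀ β, Δγ i x * π β x = π β x * Δγ i x) :
    ∀ x ∈ U, ∀ α : Fin r,
      ∑ i, ∑ l, ω i l •
          (π α x * (Δγ i x * cd Γ l H₀ x - cd Γ i H₀ x * Δγ l x) * π α x)
        = (2 : ℝ) • ∑ i, ∑ l, (ω i l * fderiv ℝ (lam α) x (EuclideanSpace.single l 1)) •
            (π α x * Δγ i x * π α x) := by
  intro x hx α
  classical
  have hxU : U ∈ nhds x := hU.mem_nhds hx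
  have dπ : ∀ β, DifferentiableAt ℝ (π β) x := fun β =>
    ((hπ β).contDiffAt hxU).differentiableAt (by simp)
  have dlam : ∀ β, DifferentiableAt ℝ (lam β) x := fun β =>
    ((hlam β).contDiffAt hxU).differentiableAt (by simp)
  set v : Fin m → EuclideanSpace ℝ (Fin m) := fun l => EuclideanSpace.single l 1 with hv
  -- product rule for mpd
  have prod_rule : ∀ (f g : EuclideanSpace ℝ (Fin m) → Matrix (Fin n) (Fin n) ℂ),
      DifferentiableAt ℝ f x → DifferentiableAt ℝ g x → ∀ l,
      mpd l (fun y => f y * g y) x = f x * mpd l g x + mpd l f x * g x := by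
    intro f g hf hg l
    have h : fderiv ℝ (fun y => f y * g y) x = _ := (hf.hasFDerivAt.mul' hg.hasFDerivAt).fderiv
    simp only [mpd, h, ContinuousLinearMap.add_apply, ContinuousLinearMap.smul_apply,
      ContinuousLinearMap.smulRight_apply, smul_eq_mul, op_smul_eq_mul]
    rfl
  -- sandwich of derivatives of projections vanishes
  have key1 : ∀ β l, π α x * mpd l (π β) x * π α x = 0 := by
    intro β l
    by_cases hβ : β = α
    · subst hβ
      have hev : (fun y => π β y * π β y) =ᶠ[nhds x] π β :=
        Filter.eventuallyEq_of_mem hxU (fun y hy => hidem y hy β)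
      have hfd : mpd l (fun y => π β y * π β y) x = mpd l (π β) x := by
        simp only [mpd, hev.fderiv_eq]
      rw [prod_rule _ _ (dπ β) (dπ β) l] at hfd
      have h2 : π β x * (π β x * mpd l (π β) x + mpd l (π β) x * π β x) * π β x
          = π β x * mpd l (π β) x * π β x := by rw [hfd]
      have hP := hidem x hx β
      rw [mul_add, add_mul, ← mul_assoc, ← mul_assoc, hP,
        mul_assoc (π β x * mpd l (π β) x), hP] at h2
      exact add_eq_right.mp h2
    · have hev : (fun y => π β y * π α y) =ᶠ[nhds x] (fun _ => (0 : Matrix (Fin n) (Fin n) ℂ)) :=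
        Filter.eventuallyEq_of_mem hxU (fun y hy => horth y hy β α hβ)
      have hfd : mpd l (fun y => π β y * π α y) x = 0 := by
        simp only [mpd, hev.fderiv_eq, fderiv_const]
        simp
      rw [prod_rule _ _ (dπ β) (dπ α) l] at hfd
      have h2 : π α x * (π β x * mpd l (π α) x + mpd l (π β) x * π α x) * π α x = 0 := by
        rw [hfd]; simp
      rw [mul_add, add_mul, ← mul_assoc, ← mul_assoc, horth x hx α β (Ne.symm hβ),
        mul_assoc (π α x * mpd l (π β) x), hidem x hx α] at h2
      simpa using h2
  -- derivative of H₀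
  have hH : H₀ = fun y => ∑ β, lam β y • π β y := funext hH₀
  have hH' : HasFDerivAt H₀
      (∑ β, ((lam β x) • fderiv ℝ (π β) x
        + (fderiv ℝ (lam β) x).smulRight (π β x))) x := by
    rw [hH]
    exact HasFDerivAt.fun_sum (fun β _ => (dlam β).hasFDerivAt.smul (dπ β).hasFDerivAt)
  have hmpdH : ∀ l, mpd l H₀ x
      = ∑ β, ((lam β x) • mpd l (π β) x
        + (fderiv ℝ (lam β) x (v l)) • π β x) := by
    intro l
    simp only [mpd, hH'.fderiv, ContinuousLinearMap.sum_apply, ContinuousLinearMap.add_apply,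
      ContinuousLinearMap.smul_apply, ContinuousLinearMap.smulRight_apply, hv]
  -- sandwich of ∂H₀
  have sandmpd : ∀ l, π α x * mpd l H₀ x * π α x
      = (fderiv ℝ (lam α) x (v l)) • π α x := by
    intro l
    rw [hmpdH l, Finset.mul_sum, Finset.sum_mul]
    rw [Finset.sum_eq_single α]
    · rw [mul_add, add_mul, mul_smul_comm, mul_smul_comm, smul_mul_assoc, smul_mul_assoc,
        key1 α l]
      simp [hidem x hx α]
    · intro β _ hβ
      rw [mul_add, add_mul, mul_smul_comm, mul_smul_comm, smul_mul_assoc, smul_mul_assoc,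
        key1 β l]
      have : π α x * π β x = 0 := horth x hx α β (Ne.symm hβ)
      rw [this]
      simp
    · intro h; exact absurd (Finset.mem_univ α) h
  -- π α absorbs H₀
  have hHπ : H₀ x * π α x = lam α x • π α x := by
    rw [hH₀ x, Finset.sum_mul, Finset.sum_eq_single α]
    · rw [smul_mul_assoc, hidem x hx α]
    · intro β _ hβ
      rw [smul_mul_assoc, horth x hx β α hβ, smul_zero]
    · intro h; exact absurd (Finset.mem_univ α) h
  have hπH : π α x * H₀ x = lam α x • π α x := by
    rw [hH₀ x, Finset.mul_sum, Finset.sum_eq_single α]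
    · rw [mul_smul_comm, hidem x hx α]
    · intro β _ hβ
      rw [mul_smul_comm, horth x hx α β (Ne.symm hβ), smul_zero]
    · intro h; exact absurd (Finset.mem_univ α) h
  -- sandwich of the covariant derivative of H₀
  have sandcd : ∀ l, π α x * cd Γ l H₀ x * π α x
      = (fderiv ℝ (lam α) x (v l)) • π α x := by
    intro l
    have : π α x * (Γ l x * H₀ x - H₀ x * Γ l x) * π α x = 0 := by
      rw [mul_sub, sub_mul, mul_assoc (π α x) (Γ l x * H₀ x), mul_assoc (Γ l x),
        hHπ, ← mul_assoc (π α x) (H₀ x), hπH]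
      rw [mul_smul_comm, smul_mul_assoc, smul_mul_assoc, mul_smul_comm,
        ← mul_assoc, sub_self]
    rw [cd, mul_add, add_mul, sandmpd l, this, add_zero]
  -- commutation and idempotency at x
  set P := π α x with hPdef
  have hP : P * P = P := hidem x hx α
  have hA : ∀ i, Δγ i x * P = P * Δγ i x := fun i => hcomm i x hx α
  set d : Fin m → ℝ := fun l => fderiv ℝ (lam α) x (v l) with hd
  set B : Fin m → Matrix (Fin n) (Fin n) ℂ := fun i => P * Δγ i x * P with hB
  have absorbL : ∀ i, P * Δγ i x = P * Δγ i x * P := by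
    intro i
    conv_lhs => rw [← hP, mul_assoc, ← hA i, ← mul_assoc]
  have absorbR : ∀ i, Δγ i x * P = P * (Δγ i x * P) := by
    intro i
    conv_lhs => rw [← hP, ← mul_assoc, hA i, mul_assoc]
  have h1 : ∀ i l, P * (Δγ i x * cd Γ l H₀ x) * P = d l • B i := by
    intro i l
    calc P * (Δγ i x * cd Γ l H₀ x) * P
        = (P * Δγ i x) * (cd Γ l H₀ x * P) := by simp only [mul_assoc]
      _ = (P * Δγ i x * P) * (cd Γ l H₀ x * P) := by rw [← absorbL]
      _ = (P * Δγ i x) * (P * cd Γ l H₀ x * P) := by simp only [mul_assoc]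
      _ = (P * Δγ i x) * (d l • P) := by rw [sandcd l]
      _ = d l • B i := by rw [mul_smul_comm]
  have h2 : ∀ i l, P * (cd Γ i H₀ x * Δγ l x) * P = d i • B l := by
    intro i l
    calc P * (cd Γ i H₀ x * Δγ l x) * P
        = P * cd Γ i H₀ x * (Δγ l x * P) := by simp only [mul_assoc]
      _ = P * cd Γ i H₀ x * (P * (Δγ l x * P)) := by rw [← absorbR]
      _ = (P * cd Γ i H₀ x * P) * (Δγ l x * P) := by simp only [mul_assoc]
      _ = (d i • P) * (Δγ l x * P) := by rw [sandcd i]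
      _ = d i • B l := by rw [smul_mul_assoc, ← mul_assoc]
  have hterm : ∀ i l, P * (Δγ i x * cd Γ l H₀ x - cd Γ i H₀ x * Δγ l x) * P
      = d l • B i - d i • B l := by
    intro i l
    rw [mul_sub, sub_mul, h1, h2]
  -- assemble
  calc ∑ i, ∑ l, ω i l • (P * (Δγ i x * cd Γ l H₀ x - cd Γ i H₀ x * Δγ l x) * P)
      = ∑ i, ∑ l, (ω i l • (d l • B i) - ω i l • (d i • B l)) := by
        refine Finset.sum_congr rfl fun i _ => Finset.sum_congr rfl fun l _ => ?_
        rw [hterm, smul_sub]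
    _ = (∑ i, ∑ l, ω i l • (d l • B i)) - ∑ i, ∑ l, ω i l • (d i • B l) := by
        rw [← Finset.sum_sub_distrib]
        refine Finset.sum_congr rfl fun i _ => ?_
        rw [← Finset.sum_sub_distrib]
    _ = (∑ i, ∑ l, ω i l • (d l • B i)) + ∑ i, ∑ l, ω i l • (d l • B i) := by
        congr 1
        rw [sub_eq_add_neg]
        congr 1
        rw [Finset.sum_comm]
        rw [← Finset.sum_neg_distrib]
        refine Finset.sum_congr rfl fun i _ => ?_
        rw [← Finset.sum_neg_distrib]
        refine Finset.sum_congr rfl fun l _ => ?_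
        rw [hω l i, neg_smul, neg_neg]
    _ = (2 : ℝ) • ∑ i, ∑ l, (ω i l * d l) • B i := by
        rw [two_smul]
        congr 1 <;>
        · refine Finset.sum_congr rfl fun i _ => Finset.sum_congr rfl fun l _ => ?_
          rw [smul_smul]
    _ = (2 : ℝ) • ∑ i, ∑ l, (ω i l * fderiv ℝ (lam α) x (EuclideanSpace.single l 1)) •
          (π α x * Δγ i x * π α x) := rfl
end

section
/- Let H ∈ R[[t]] be a formal power series whose constant coefficient equals H_0 = ∑_α λ_α p_α. Then there exist P_1, …, P_r ∈ R[[t]] such that P_α P_β = 0 for α ≠ β, P_α² = P_α, ∑_α P_α = 1, P_α ≡ p_α (mod t), and H P_α = P_α H for every α. (This is the algebraic core of Theorem 1: a complete orthogonal family of ħ-corrected projections congruent to the eigenprojections of the principal symbol and commuting with the full Hamiltonian to all orders, obtained by the paper's order-by-order conjugation argument.) -/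
/-!
Put `h0 = ∑ λᵢ pᵢ`. Since `λᵢ - λⱼ` is a central unit, `X ↦ [h0, X]` acts on the block
`pᵢ X pⱼ` as multiplication by `λᵢ - λⱼ`, hence is invertible on the off-diagonal blocks.
Solving `H U = U D` order by order in `t` with `U ≡ 1`, the new unknowns at order `n + 1`
enter only through `[h0, uₙ₊₁] - dₙ₊₁`, so one can take `dₙ₊₁` block diagonal and let
`uₙ₊₁` absorb the off-diagonal part. Then `U` is a unit, `D` commutes with every `pᵢ`,
and `Pᵢ = U pᵢ U⁻¹`.
-/

open PowerSeries
open scoped Ring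

section Blocks

variable {R : Type*} [Ring R] {ι : Type*} [Fintype ι]

theorem Subring.ringInverse_mem_center {a : R} (ha : a ∈ Subring.center R) :
    a⁻¹ʳ ∈ Subring.center R := by
  by_cases hu : IsUnit a
  · obtain ⟨u, rfl⟩ := hu
    rw [Ring.inverse_unit]
    exact Set.units_inv_mem_center ha
  · rw [Ring.inverse_non_unit a hu]
    exact zero_mem _

def blockDiag (p : ι → R) (X : R) : R := ∑ i, p i * X * p i

/-- The diagonal terms `i = j` vanish since `Ring.inverse 0 = 0`. -/
noncomputable def solveCommutator (p lam : ι → R) (X : R) : R :=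
  ∑ i, ∑ j, (lam i - lam j)⁻¹ʳ * (p i * X * p j)

variable {p lam : ι → R}

theorem OrthogonalIdempotents.blockDiag_mem_centralizer (hp : OrthogonalIdempotents p) (X : R) :
    blockDiag p X ∈ Set.centralizer (Set.range p) := by
  classical
  rintro _ ⟨j, rfl⟩
  simp [blockDiag, Finset.mul_sum, Finset.sum_mul, ← mul_assoc, hp.mul_eq, mul_assoc (p _ * X)]

theorem OrthogonalIdempotents.sum_mul_mul (hp : OrthogonalIdempotents p) (j : ι) :
    (∑ i, lam i * p i) * p j = lam j * p j := by
  classical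
  simp [Finset.sum_mul, mul_assoc, hp.mul_eq]

theorem OrthogonalIdempotents.mul_sum_mul (hp : OrthogonalIdempotents p)
    (hlam : ∀ i, lam i ∈ Subring.center R) (j : ι) :
    p j * (∑ i, lam i * p i) = lam j * p j := by
  classical
  have hcomm i : p j * (lam i * p i) = lam i * (p j * p i) := by
    rw [← mul_assoc, Subring.mem_center_iff.mp (hlam i), mul_assoc]
  simp [Finset.mul_sum, hcomm, hp.mul_eq]

theorem OrthogonalIdempotents.sum_mul_mem_centralizer (hp : OrthogonalIdempotents p)
    (hlam : ∀ i, lam i ∈ Subring.center R) :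
    ∑ i, lam i * p i ∈ Set.centralizer (Set.range p) := by
  rintro _ ⟨j, rfl⟩
  rw [hp.sum_mul_mul, hp.mul_sum_mul hlam]

theorem CompleteOrthogonalIdempotents.commutator_solveCommutator
    (hp : CompleteOrthogonalIdempotents p) (hlam : ∀ i, lam i ∈ Subring.center R)
    (hgap : Pairwise fun i j ↦ IsUnit (lam i - lam j)) (X : R) :
    (∑ i, lam i * p i) * solveCommutator p lam X - solveCommutator p lam X * ∑ i, lam i * p i =
      X - blockDiag p X := by
  classical
  set h0 := ∑ i, lam i * p i
  have hblock i j : h0 * ((lam i - lam j)⁻¹ʳ * (p i * X * p j))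
      - (lam i - lam j)⁻¹ʳ * (p i * X * p j) * h0 =
      p i * X * p j - if i = j then p i * X * p j else 0 := by
    have hinv := Subring.mem_center_iff.mp <|
      Subring.ringInverse_mem_center (sub_mem (hlam i) (hlam j))
    have hleft : h0 * (p i * X * p j) = lam i * (p i * X * p j) := by
      rw [← mul_assoc, ← mul_assoc, show h0 * p i = lam i * p i from hp.sum_mul_mul i]
      simp only [mul_assoc]
    have hright : p i * X * p j * h0 = lam j * (p i * X * p j) := by
      rw [mul_assoc, show p j * h0 = lam j * p j from hp.mul_sum_mul hlam j, ← mul_assoc,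
        Subring.mem_center_iff.mp (hlam j), mul_assoc]
    set Y := p i * X * p j
    rw [← mul_assoc, hinv h0, mul_assoc, mul_assoc, hleft, hright, ← mul_sub, ← sub_mul,
      ← mul_assoc]
    rcases eq_or_ne i j with rfl | hij
    · simp
    · rw [Ring.inverse_mul_cancel _ (hgap hij), if_neg hij, one_mul, sub_zero]
  have hsum : ∑ i, ∑ j, p i * X * p j = X := by
    rw [← Finset.sum_mul_sum, ← Finset.sum_mul, hp.complete, one_mul, mul_one]
  simp only [solveCommutator, Finset.mul_sum, Finset.sum_mul, ← Finset.sum_sub_distrib, hblock]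
  simp only [Finset.sum_sub_distrib, Finset.sum_ite_eq, Finset.mem_univ, if_true, hsum, blockDiag]

end Blocks

namespace PowerSeries

variable {A : Type*} [Ring A]

/-- The coefficients `(uₙ, dₙ)` of `U` and `D` in `H * U = U * D`: `F` collects the terms of the
coefficient of `tⁿ⁺¹` not involving `uₙ₊₁, dₙ₊₁`, which then must satisfy
`[h0, uₙ₊₁] = dₙ₊₁ - F`. -/
noncomputable def intertwinerCoeff (h0 : A) (Φ Δ : A → A) (H : A⟦X⟧) : ℕ → A × A
  | 0 => (1, h0)
  | n + 1 =>
    let F := ∑ k : Fin (n + 1), coeff (k + 1) H * (intertwinerCoeff h0 Φ Δ H (n - k)).1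
      - ∑ k : Fin n, (intertwinerCoeff h0 Φ Δ H (k + 1)).1 * (intertwinerCoeff h0 Φ Δ H (n - k)).2
    (-Φ F, Δ F)
  decreasing_by all_goals (try have := k.isLt); omega

variable {h0 : A} {Φ Δ : A → A} {H : A⟦X⟧}

theorem sum_coeff_mul_intertwinerCoeff (hΦ : ∀ x, h0 * Φ x - Φ x * h0 = x - Δ x)
    (hH : constantCoeff H = h0) (n : ℕ) :
    ∑ k ∈ Finset.range (n + 1), coeff k H * (intertwinerCoeff h0 Φ Δ H (n - k)).1 =
      ∑ k ∈ Finset.range (n + 1),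
        (intertwinerCoeff h0 Φ Δ H k).1 * (intertwinerCoeff h0 Φ Δ H (n - k)).2 := by
  set c := intertwinerCoeff h0 Φ Δ H
  have hc0 : c 0 = (1, h0) := intertwinerCoeff.eq_1 ..
  rcases n with _ | n
  · simp [hc0, hH]
  conv_lhs => rw [Finset.sum_range_succ']
  conv_rhs => rw [Finset.sum_range_succ', Finset.sum_range_succ]
  simp only [Nat.add_sub_add_right, Nat.sub_zero, Nat.sub_self, hc0,
    coeff_zero_eq_constantCoeff_apply, hH, intertwinerCoeff.eq_2 h0 Φ Δ H n, c,
    Finset.sum_range]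
  have horder (a b : A) : a + h0 * -Φ (a - b) = b + -Φ (a - b) * h0 + 1 * Δ (a - b) := by
    rw [mul_neg, neg_mul, one_mul, ← sub_eq_zero, ← neg_eq_zero, ← sub_eq_zero.mpr (hΦ (a - b))]
    abel
  exact horder _ _

theorem exists_mul_eq_mul_coeff_mem {S : Set A} (hΦ : ∀ x, h0 * Φ x - Φ x * h0 = x - Δ x)
    (hΔ : ∀ x, Δ x ∈ S) (h0S : h0 ∈ S) (hH : constantCoeff H = h0) :
    ∃ U D : A⟦X⟧, constantCoeff U = 1 ∧ H * U = U * D ∧ ∀ n, coeff n D ∈ S := by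
  set c := intertwinerCoeff h0 Φ Δ H
  have hc0 : c 0 = (1, h0) := intertwinerCoeff.eq_1 ..
  refine ⟨mk fun n ↦ (c n).1, mk fun n ↦ (c n).2, ?_, ?_, ?_⟩
  · simp [← coeff_zero_eq_constantCoeff_apply, hc0]
  · ext n
    simp only [coeff_mul, coeff_mk]
    rw [Finset.Nat.sum_antidiagonal_eq_sum_range_succ (fun i j ↦ coeff i H * (c j).1),
      Finset.Nat.sum_antidiagonal_eq_sum_range_succ (fun i j ↦ (c i).1 * (c j).2)]
    exact sum_coeff_mul_intertwinerCoeff hΦ hH n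
  · rintro (_ | n)
    · simpa [hc0] using h0S
    · rw [coeff_mk, show c (n + 1) = _ from intertwinerCoeff.eq_2 h0 Φ Δ H n]
      exact hΔ _

theorem commute_C_of_forall_commute_coeff {φ : A⟦X⟧} {a : A} (h : ∀ n, Commute (coeff n φ) a) :
    Commute φ (C a) := by
  ext n
  rw [coeff_mul_C, coeff_C_mul, (h n).eq]

end PowerSeries

theorem CompleteOrthogonalIdempotents.conj_units {S : Type*} [Ring S] {ι : Type*} [Fintype ι]
    {e : ι → S} (he : CompleteOrthogonalIdempotents e) (u : Sˣ) :
    CompleteOrthogonalIdempotents fun i ↦ u * e i * ↑u⁻¹ :=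
  he.map (MulSemiringAction.toRingEquiv (ConjAct Sˣ) S (ConjAct.toConjAct u)).toRingHom

theorem Commute.units_conj_of_mul_eq_mul {S : Type*} [Monoid S] {a b x : S} {u : Sˣ}
    (hab : a * u = u * b) (hx : Commute b x) : Commute a (u * x * ↑u⁻¹) := by
  obtain rfl : a = u * b * ↑u⁻¹ := by rw [← hab, Units.mul_inv_cancel_right]
  simp only [Commute, SemiconjBy, mul_assoc, Units.inv_mul_cancel_left]
  rw [← mul_assoc b, hx.eq, mul_assoc]

theorem exists_corrected_quantum_projections_general
    (R : Type*) [Ring R] (r : ℕ)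
    (p : Fin r → R) (lam : Fin r → R)
    (horth : ∀ α β, α ≠ β → p α * p β = 0)
    (hidem : ∀ α, p α * p α = p α)
    (hsum : ∑ α, p α = 1)
    (hcentral : ∀ α (x : R), lam α * x = x * lam α)
    (hinv : ∀ α β, α ≠ β → IsUnit (lam α - lam β))
    (H : PowerSeries R)
    (hH : PowerSeries.constantCoeff H = ∑ α, lam α * p α) :
    ∃ P : Fin r → PowerSeries R,
      (∀ α β, α ≠ β → P α * P β = 0) ∧
      (∀ α, P α * P α = P α) ∧
      (∑ α, P α = 1) ∧
      (∀ α, PowerSeries.constantCoeff (P α) = p α) ∧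
      (∀ α, H * P α = P α * H) := by
  have hp : CompleteOrthogonalIdempotents p := ⟨⟨hidem, fun α β h ↦ horth α β h⟩, hsum⟩
  have hlam α : lam α ∈ Subring.center R :=
    Subring.mem_center_iff.mpr fun x ↦ (hcentral α x).symm
  obtain ⟨U, D, hU, hHU, hD⟩ := exists_mul_eq_mul_coeff_mem
    (hp.commutator_solveCommutator hlam fun α β h ↦ hinv α β h)
    hp.blockDiag_mem_centralizer (hp.sum_mul_mem_centralizer hlam) hH
  obtain ⟨u, rfl⟩ : IsUnit U := isUnit_iff_constantCoeff.mpr (hU ▸ isUnit_one)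
  have hDp α : Commute D (C (p α)) :=
    commute_C_of_forall_commute_coeff fun n ↦ (hD n (p α) ⟨α, rfl⟩).symm
  have hu_inv : constantCoeff (↑u⁻¹ : R⟦X⟧) = 1 := by
    have h := congrArg constantCoeff u.mul_inv
    rwa [map_mul, hU, one_mul, map_one] at h
  have hP := (hp.map C).conj_units u
  refine ⟨fun α ↦ u * C (p α) * ↑u⁻¹, fun α β h ↦ ?_, fun α ↦ ?_,
    ?_, fun α ↦ ?_, fun α ↦ ?_⟩
  · exact hP.ortho h
  · exact (hP.idem α).eq
  · exact hP.complete
  · simp [hU, hu_inv]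
  · exact (Commute.units_conj_of_mul_eq_mul hHU (hDp α)).eq

/-- algebraic core of Theorem 1: given a complete orthogonal family
of idempotents `p_α` in an associative unital `ℂ`-algebra `R`, central elements
`λ_α` with `λ_α − λ_β` invertible for `α ≠ β`, and a formal power series
`H ∈ R[[t]]` whose constant coefficient is `H_0 = ∑_α λ_α p_α`, there is a
complete orthogonal family of idempotents `P_α ∈ R[[t]]` with `P_α ≡ p_α (mod t)`
commuting with `H` to all orders. -/
theorem exists_corrected_quantum_projections
    (R : Type*) [Ring R] [Algebra ℂ R] (r : ℕ)
    (p : Fin r → R) (lam : Fin r → R)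
    (horth : ∀ α β, α ≠ β → p α * p β = 0)
    (hidem : ∀ α, p α * p α = p α)
    (hsum : ∑ α, p α = 1)
    (hcentral : ∀ α (x : R), lam α * x = x * lam α)
    (hinv : ∀ α β, α ≠ β → IsUnit (lam α - lam β))
    (H : PowerSeries R)
    (hH : PowerSeries.constantCoeff H = ∑ α, lam α * p α) :
    ∃ P : Fin r → PowerSeries R,
      (∀ α β, α ≠ β → P α * P β = 0) ∧
      (∀ α, P α * P α = P α) ∧
      (∑ α, P α = 1) ∧
      (∀ α, PowerSeries.constantCoeff (P α) = p α) ∧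
      (∀ α, H * P α = P α * H) :=
  exists_corrected_quantum_projections_general R r p lam horth hidem hsum hcentral hinv H hH
end
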